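/- arXiv:math/0206056 — 5 statements merged into one kernel-verified Lean document; each statement's English description precedes it below -/
import Mathlib

section
/- Let A be a Fréchet–Stein algebra with defining Banach algebras A_n. Then A_n is flat as a right A-module for every n. -/
/-- Equational criterion: the target of `φ : S →+* R` is flat as a *right* `S`-module. -/
def RightFlatRingHom {S R : Type*} [Ring S] [Ring R] (φ : S →+* R) : Prop :=
  ∀ (k : ℕ) (r : Fin k → S) (m : Fin k → R),
    (∑ i, m i * φ (r i)) = 0 →
    ∃ (l : ℕ) (a : Fin k → Fin l → S) (y : Fin l → R),
      (∀ i, m i = ∑ j, y j * φ (a i j)) ∧ ∀ j, (∑ i, a i j * r i) = 0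

/-- `f : N →+ N'` exhibits the `R`-module `N'` as the scalar extension (base change)
`R ⊗_S N` of the `S`-module `N` along `φ : S →+* R`, via the universal property. -/
def IsScalarExtension {S R : Type} [Ring S] [Ring R] (φ : S →+* R)
    (N : Type) [AddCommGroup N] [Module S N]
    (N' : Type) [AddCommGroup N'] [Module R N'] (f : N →+ N') : Prop :=
  (∀ (s : S) (x : N), f (s • x) = φ s • f x) ∧
  ∀ (P : Type) [AddCommGroup P] [Module R P] (g : N →+ P),
    (∀ (s : S) (x : N), g (s • x) = φ s • g x) →
    ∃! h : N' →ₗ[R] P, ∀ x, h (f x) = g x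

/-- A coherent sheaf for the projective system of rings `(A n, φ n)`: a compatible family of
finitely generated `A n`-modules `N n` with `A n ⊗_{A (n+1)} N (n+1) ≅ N n`. -/
structure CoherentSheaf (A : ℕ → Type) [∀ n, Ring (A n)] (φ : ∀ n, A (n+1) →+* A n) where
  N : ℕ → Type
  [acg : ∀ n, AddCommGroup (N n)]
  [mod : ∀ n, Module (A n) (N n)]
  fin : ∀ n, Module.Finite (A n) (N n)
  f : ∀ n, N (n+1) →+ N n
  ext : ∀ n, IsScalarExtension (φ n) (N (n+1)) (N n) (f n)

attribute [instance] CoherentSheaf.acg CoherentSheaf.mod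

/-- The additive group of global sections `lim_n N n` of a coherent sheaf. -/
def CoherentSheaf.limSubgroup {A : ℕ → Type} [∀ n, Ring (A n)] {φ : ∀ n, A (n+1) →+* A n}
    (C : CoherentSheaf A φ) : AddSubgroup (∀ n, C.N n) where
  carrier := {x | ∀ n, C.f n (x (n+1)) = x n}
  add_mem' := by intro x y hx hy n; simp [hx n, hy n]
  zero_mem' := by intro n; simp
  neg_mem' := by intro x hx n; simp [hx n]

/-- The projection from the global sections of a coherent sheaf to its `n`-th layer. -/
def CoherentSheaf.proj {A : ℕ → Type} [∀ n, Ring (A n)] {φ : ∀ n, A (n+1) →+* A n}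
    (C : CoherentSheaf A φ) (n : ℕ) : ↥C.limSubgroup →+ C.N n :=
  (Pi.evalAddMonoidHom (fun k => C.N k) n).comp C.limSubgroup.subtype

/-- `M` is a coadmissible module for the Fréchet–Stein-type presentation
`π n : S →+* A n` of `S`: it is (equivariantly) isomorphic to the global sections of a
coherent sheaf for `(A n, φ n)`. -/
def IsCoadmissible (A : ℕ → Type) [∀ n, Ring (A n)] (φ : ∀ n, A (n+1) →+* A n)
    (S : Type) [Ring S] (π : ∀ n, S →+* A n)
    (M : Type) [AddCommGroup M] [Module S M] : Prop :=
  ∃ (C : CoherentSheaf A φ) (e : M ≃+ ↥C.limSubgroup),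
    ∀ (s : S) (x : M) (n : ℕ),
      ((e (s • x) : ∀ k, C.N k) n) = π n s • ((e x : ∀ k, C.N k) n)

/-!
STATEMENT 7: Let `A` be a Fréchet–Stein algebra with defining Banach algebras `A n`.
Then `A n` is flat as a right `A`-module for every `n`.

The Fréchet–Stein algebra is presented as a ring `AA` which is the projective limit of
left noetherian `K`-Banach algebras `A n` along continuous ring homomorphisms
`φ n : A (n+1) →+* A n` which are right-flat, the maps `π n : AA →+* A n` having dense
range.  Flatness of a right module is expressed by the equational criterion.
-/


section ML
variable {G : ℕ → Type} [∀ j, NormedAddCommGroup (G j)]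

/-- Push an element at level `t` down to all levels (0 above `t`). -/
def mlF (T : ∀ j, G (j+1) →+ G j) : (t : ℕ) → G t → (ℓ : ℕ) → G ℓ
  | 0, g => fun ℓ => match ℓ with
    | 0 => g
    | _+1 => 0
  | t+1, g => Function.update (mlF T t (T t g)) (t+1) g

theorem mlF_self (T : ∀ j, G (j+1) →+ G j) : ∀ (t : ℕ) (g : G t), mlF T t g t = g
  | 0, g => rfl
  | t+1, g => Function.update_self _ _ _

theorem mlF_succ (T : ∀ j, G (j+1) →+ G j) (t : ℕ) (g : G (t+1)) (ℓ : ℕ) (h : ℓ ≠ t+1) :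
    mlF T (t+1) g ℓ = mlF T t (T t g) ℓ := by
  simp only [mlF, Function.update_of_ne h]

theorem mlF_gt (T : ∀ j, G (j+1) →+ G j) : ∀ (t : ℕ) (g : G t) (ℓ : ℕ), t < ℓ → mlF T t g ℓ = 0
  | 0, g, ℓ+1, _ => rfl
  | t+1, g, ℓ, h => by
      rw [mlF_succ T t g ℓ (by omega)]
      exact mlF_gt T t _ ℓ (by omega)

theorem mlF_step (T : ∀ j, G (j+1) →+ G j) :
    ∀ (t : ℕ) (g : G t) (ℓ : ℕ), ℓ < t → mlF T t g ℓ = T ℓ (mlF T t g (ℓ+1))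
  | t+1, g, ℓ, h => by
      rw [mlF_succ T t g ℓ (by omega)]
      rcases Nat.lt_or_ge ℓ t with h' | h'
      · rw [mlF_step T t _ ℓ h', mlF_succ T t g (ℓ+1) (by omega)]
      · have hℓ : ℓ = t := by omega
        subst hℓ
        rw [mlF_self, mlF_self]

theorem mlF_sub (T : ∀ j, G (j+1) →+ G j) :
    ∀ (t : ℕ) (g g' : G t) (ℓ : ℕ), mlF T t (g - g') ℓ = mlF T t g ℓ - mlF T t g' ℓ
  | 0, g, g', 0 => rfl
  | 0, g, g', ℓ+1 => by simp [mlF]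
  | t+1, g, g', ℓ => by
      rcases eq_or_ne ℓ (t+1) with h | h
      · subst h; rw [mlF_self, mlF_self, mlF_self]
      · rw [mlF_succ T t _ ℓ h, mlF_succ T t g ℓ h, mlF_succ T t g' ℓ h, map_sub,
          mlF_sub T t _ _ ℓ]

theorem mlF_mem (T : ∀ j, G (j+1) →+ G j) (S : ∀ j, AddSubgroup (G j))
    (hTS : ∀ j, ∀ g ∈ S (j+1), T j g ∈ S j) :
    ∀ (t : ℕ) (g : G t), g ∈ S t → ∀ ℓ, mlF T t g ℓ ∈ S ℓ
  | 0, g, hg, 0 => hg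
  | 0, g, hg, ℓ+1 => zero_mem _
  | t+1, g, hg, ℓ => by
      rcases eq_or_ne ℓ (t+1) with h | h
      · subst h; rw [mlF_self]; exact hg
      · rw [mlF_succ T t g ℓ h]
        exact mlF_mem T S hTS t _ (hTS t g hg) ℓ

theorem mlF_norm (T : ∀ j, G (j+1) →+ G j) (hT : ∀ j, Continuous (T j)) :
    ∀ (t : ℕ) (ε : ℝ), 0 < ε → ∃ δ > 0, ∀ g : G t, ‖g‖ < δ → ∀ ℓ, ‖mlF T t g ℓ‖ ≤ ε
  | 0, ε, hε => ⟨ε, hε, fun g hg ℓ => by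
      match ℓ with
      | 0 => exact hg.le
      | ℓ+1 => simp [mlF]; exact hε.le⟩
  | t+1, ε, hε => by
      obtain ⟨δ', hδ'pos, hδ'⟩ := mlF_norm T hT t ε hε
      have hc : ∃ δ₀ > 0, ∀ g : G (t+1), ‖g‖ < δ₀ → ‖T t g‖ < δ' := by
        have h := Metric.continuousAt_iff.mp ((hT t).continuousAt (x := (0 : G (t+1)))) δ' hδ'pos
        obtain ⟨δ₀, hδ₀, h⟩ := h
        refine ⟨δ₀, hδ₀, fun g hg => ?_⟩
        have := h (x := g) (by simpa [dist_zero_right] using hg)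
        simpa [map_zero, dist_zero_right] using this
      obtain ⟨δ₀, hδ₀pos, hδ₀⟩ := hc
      refine ⟨min δ₀ ε, lt_min hδ₀pos hε, fun g hg ℓ => ?_⟩
      rcases eq_or_ne ℓ (t+1) with h | h
      · subst h; rw [mlF_self]
        exact (hg.trans_le (min_le_right _ _)).le
      · rw [mlF_succ T t g ℓ h]
        exact hδ' _ (hδ₀ g (hg.trans_le (min_le_left _ _))) ℓ

theorem mittagLeffler [∀ j, CompleteSpace (G j)]
    (T : ∀ j, G (j+1) →+ G j) (hT : ∀ j, Continuous (T j))
    (S : ∀ j, AddSubgroup (G j)) (hSc : ∀ j, IsClosed (S j : Set (G j)))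
    (hTS : ∀ j, ∀ g ∈ S (j+1), T j g ∈ S j)
    (hde : ∀ j, ∀ y ∈ S j, ∀ ε : ℝ, 0 < ε → ∃ w ∈ S (j+1), dist (T j w) y < ε)
    (n : ℕ) (y₀ : G n) (hy₀ : y₀ ∈ S n) {ε : ℝ} (hε : 0 < ε) :
    ∃ x : ∀ j, G j, (∀ j, x j ∈ S j) ∧ (∀ j, T j (x (j+1)) = x j) ∧ dist (x n) y₀ ≤ ε := by
  classical
  have hmod : ∀ t : ℕ, ∃ δ > 0, ∀ g : G (n+t), ‖g‖ < δ → ∀ ℓ, ‖mlF T (n+t) g ℓ‖ ≤ ε / 2^(t+1) :=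
    fun t => mlF_norm T hT (n+t) _ (by positivity)
  choose δ hδpos hδ using hmod
  have hrec : ∀ (t : ℕ) (gt : {v : G (n+t) // v ∈ S (n+t)}),
      ∃ w : {v : G (n+t+1) // v ∈ S (n+t+1)}, dist (T (n+t) w.1) gt.1 < δ t := by
    intro t gt
    obtain ⟨w, hw, hww⟩ := hde (n+t) gt.1 gt.2 (δ t) (hδpos t)
    exact ⟨⟨w, hw⟩, hww⟩
  let g : ∀ t, {v : G (n+t) // v ∈ S (n+t)} :=
    fun t => Nat.rec ⟨y₀, hy₀⟩ (fun t gt => (hrec t gt).choose) t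
  have hgstep : ∀ t, dist (T (n+t) (g (t+1)).1) (g t).1 < δ t := fun t => (hrec t (g t)).choose_spec
  let c : ℕ → ∀ ℓ, G ℓ := fun t => mlF T (n+t) (g t).1
  have hcmem : ∀ t ℓ, c t ℓ ∈ S ℓ := fun t ℓ => mlF_mem T S hTS _ _ (g t).2 ℓ
  have hdiff : ∀ t ℓ, ℓ ≤ n + t → dist (c t ℓ) (c (t+1) ℓ) ≤ ε / 2^(t+1) := by
    intro t ℓ hℓ
    have h1 : c (t+1) ℓ = mlF T (n+t) (T (n+t) (g (t+1)).1) ℓ :=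
      mlF_succ T (n+t) (g (t+1)).1 ℓ (by omega)
    rw [dist_eq_norm, h1, ← mlF_sub]
    apply hδ t
    rw [← dist_eq_norm, dist_comm]
    exact hgstep t
  have hconv : ∀ ℓ, ∃ xl : G ℓ, Filter.Tendsto (fun t => c t ℓ) Filter.atTop (nhds xl) := by
    intro ℓ
    have hcauchy : CauchySeq (fun t => c (t + ℓ) ℓ) := by
      apply cauchySeq_of_dist_le_of_summable (fun t => ε / 2^(t+ℓ+1))
      · intro t; simpa [Nat.succ_add] using hdiff (t+ℓ) ℓ (by omega)
      · refine (summable_geometric_two.mul_left (ε / 2^(ℓ+1))).congr fun t => ?_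
        rw [one_div, inv_pow, ← div_eq_mul_inv, div_div, ← pow_add]
        congr 2
        omega
    obtain ⟨xl, hxl⟩ := cauchySeq_tendsto_of_complete hcauchy
    exact ⟨xl, (Filter.tendsto_add_atTop_iff_nat ℓ).mp hxl⟩
  choose x hx using hconv
  refine ⟨x, ?_, ?_, ?_⟩
  · intro j
    exact (hSc j).mem_of_tendsto (hx j) (Filter.Eventually.of_forall fun t => hcmem t j)
  · intro j
    have h1 : Filter.Tendsto (fun t => T j (c t (j+1))) Filter.atTop (nhds (T j (x (j+1)))) :=
      ((hT j).tendsto _).comp (hx (j+1))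
    have h2 : ∀ᶠ t in Filter.atTop, T j (c t (j+1)) = c t j := by
      filter_upwards [Filter.eventually_ge_atTop (j+1)] with t ht
      exact (mlF_step T (n+t) (g t).1 j (by omega)).symm
    exact tendsto_nhds_unique (h1.congr' h2) (hx j)
  · have key : ∀ t, dist (c t n) y₀ ≤ ∑ s ∈ Finset.range t, ε / 2^(s+1) := by
      intro t
      induction t with
      | zero =>
        have : c 0 n = y₀ := mlF_self T (n+0) (g 0).1
        simp [this]
      | succ t ih =>
        calc dist (c (t+1) n) y₀ ≤ dist (c (t+1) n) (c t n) + dist (c t n) y₀ := dist_triangle _ _ _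
          _ ≤ ε / 2^(t+1) + ∑ s ∈ Finset.range t, ε / 2^(s+1) := by
              gcongr
              rw [dist_comm]; exact hdiff t n (by omega)
          _ = ∑ s ∈ Finset.range (t+1), ε / 2^(s+1) := by rw [Finset.sum_range_succ]; ring
    have hsum : ∀ t, ∑ s ∈ Finset.range t, ε / 2^(s+1) ≤ ε := by
      intro t
      calc ∑ s ∈ Finset.range t, ε / 2^(s+1) = (ε/2) * ∑ s ∈ Finset.range t, (1/2:ℝ)^s := by
            rw [Finset.mul_sum]
            refine Finset.sum_congr rfl fun s _ => ?_
            rw [pow_succ]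
            rw [one_div, inv_pow]
            ring
        _ ≤ (ε/2) * 2 :=
            mul_le_mul_of_nonneg_left (sum_geometric_two_le t) (by linarith)
        _ = ε := by ring
    exact le_of_tendsto ((hx n).dist tendsto_const_nhds)
      (Filter.Eventually.of_forall fun t => (key t).trans (hsum t))

end ML

set_option maxHeartbeats 1000000 in
theorem statement7
    (K : Type) [NontriviallyNormedField K] [CompleteSpace K] [IsUltrametricDist K]
    (A : ℕ → Type) [∀ n, NormedRing (A n)] [∀ n, NormedAlgebra K (A n)]
    [∀ n, CompleteSpace (A n)]
    (hnoeth : ∀ n, IsNoetherianRing (A n))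
    (φ : ∀ n, A (n+1) →+* A n)
    (hφcont : ∀ n, Continuous (φ n))
    (hflat : ∀ n, RightFlatRingHom (φ n))
    (AA : Type) [Ring AA] (π : ∀ n, AA →+* A n)
    (hcompat : ∀ n a, φ n (π (n+1) a) = π n a)
    (hdense : ∀ n, DenseRange (π n))
    (hlim : ∀ x : ∀ n, A n, (∀ n, φ n (x (n+1)) = x n) → ∃! a : AA, ∀ n, π n a = x n)
    (n : ℕ) :
    RightFlatRingHom (π n) := by
  classical
  intro k r m hm
  haveI := hnoeth n
  -- the submodules of relations at each level
  let relMap : ∀ ℓ, (Fin k → A ℓ) →ₗ[A ℓ] A ℓ := fun ℓ =>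
    { toFun := fun y => ∑ i, y i * π ℓ (r i)
      map_add' := fun a b => by simp [add_mul, Finset.sum_add_distrib]
      map_smul' := fun c y => by simp [Finset.mul_sum, mul_assoc, smul_eq_mul] }
  let Rel : ∀ ℓ, Submodule (A ℓ) (Fin k → A ℓ) := fun ℓ => LinearMap.ker (relMap ℓ)
  have hRelClosed : ∀ ℓ, IsClosed ((Rel ℓ : Set (Fin k → A ℓ))) := by
    intro ℓ
    have h : (Rel ℓ : Set (Fin k → A ℓ)) = {y | ∑ i, y i * π ℓ (r i) = 0} := rfl
    rw [h]
    exact isClosed_eq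
      (continuous_finset_sum _ fun i _ => (continuous_apply i).mul continuous_const)
      continuous_const
  -- transition maps
  let T : ∀ j, (Fin k → A (j+1)) →+ (Fin k → A j) := fun j =>
    { toFun := fun y i => φ j (y i)
      map_zero' := by funext i; simp
      map_add' := fun a b => by funext i; simp }
  have hTcont : ∀ j, Continuous (T j) :=
    fun j => continuous_pi fun i => (hφcont j).comp (continuous_apply i)
  have hTS : ∀ j, ∀ g ∈ (Rel (j+1)).toAddSubgroup, T j g ∈ (Rel j).toAddSubgroup := by
    intro j g hg
    have hg' : ∑ i, g i * π (j+1) (r i) = 0 := hg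
    show ∑ i, φ j (g i) * π j (r i) = 0
    calc ∑ i, φ j (g i) * π j (r i) = ∑ i, φ j (g i * π (j+1) (r i)) := by
          refine Finset.sum_congr rfl fun i _ => ?_
          rw [map_mul, hcompat]
      _ = φ j (∑ i, g i * π (j+1) (r i)) := (map_sum _ _ _).symm
      _ = 0 := by rw [hg', map_zero]
  -- density of transition maps on relation modules (via flatness and density of π)
  have hde : ∀ j, ∀ y ∈ (Rel j).toAddSubgroup, ∀ ε : ℝ, 0 < ε →
      ∃ w ∈ (Rel (j+1)).toAddSubgroup, dist (T j w) y < ε := by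
    intro j y hy ε hε
    obtain ⟨l, a, z, hz, hcol⟩ := hflat j k (fun i => π (j+1) (r i)) y (by
      have hy' : ∑ i, y i * π j (r i) = 0 := hy
      calc ∑ i, y i * φ j (π (j+1) (r i)) = ∑ i, y i * π j (r i) := by
            refine Finset.sum_congr rfl fun i _ => ?_
            rw [hcompat]
        _ = 0 := hy')
    set C : ℝ := 1 + ∑ i : Fin k, ∑ jj : Fin l, ‖φ j (a i jj)‖ with hCdef
    have hCpos : 0 < C := by positivity
    set δ : ℝ := ε / (2 * C) with hδdef
    have hδpos : 0 < δ := by positivity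
    have hpick : ∀ jj : Fin l, ∃ b : AA, dist (z jj) (π j b) < δ :=
      fun jj => (hdense j).exists_dist_lt (z jj) hδpos
    choose b hb using hpick
    refine ⟨fun i => ∑ jj, π (j+1) (b jj) * a i jj, ?_, ?_⟩
    · show ∑ i, (∑ jj, π (j+1) (b jj) * a i jj) * π (j+1) (r i) = 0
      calc ∑ i, (∑ jj, π (j+1) (b jj) * a i jj) * π (j+1) (r i)
          = ∑ i, ∑ jj, π (j+1) (b jj) * (a i jj * π (j+1) (r i)) := by
            refine Finset.sum_congr rfl fun i _ => ?_
            rw [Finset.sum_mul]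
            exact Finset.sum_congr rfl fun jj _ => by rw [mul_assoc]
        _ = ∑ jj, π (j+1) (b jj) * ∑ i, a i jj * π (j+1) (r i) := by
            rw [Finset.sum_comm]
            exact Finset.sum_congr rfl fun jj _ => by rw [Finset.mul_sum]
        _ = 0 := by
            refine Finset.sum_eq_zero fun jj _ => ?_
            have := hcol jj
            rw [this, mul_zero]
    · rw [dist_pi_lt_iff hε]
      intro i
      have hTj : T j (fun i => ∑ jj, π (j+1) (b jj) * a i jj) i
          = ∑ jj, π j (b jj) * φ j (a i jj) := by
        show φ j (∑ jj, π (j+1) (b jj) * a i jj) = _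
        rw [map_sum]
        exact Finset.sum_congr rfl fun jj _ => by rw [map_mul, hcompat]
      rw [dist_eq_norm, hTj, hz i]
      have hre : ∑ jj, π j (b jj) * φ j (a i jj) - ∑ jj, z jj * φ j (a i jj)
          = ∑ jj, (π j (b jj) - z jj) * φ j (a i jj) := by
        rw [← Finset.sum_sub_distrib]
        exact Finset.sum_congr rfl fun jj _ => (sub_mul _ _ _).symm
      rw [hre]
      calc ‖∑ jj, (π j (b jj) - z jj) * φ j (a i jj)‖
          ≤ ∑ jj, ‖(π j (b jj) - z jj) * φ j (a i jj)‖ := norm_sum_le _ _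
        _ ≤ ∑ jj, δ * ‖φ j (a i jj)‖ := by
            refine Finset.sum_le_sum fun jj _ => ?_
            refine (norm_mul_le _ _).trans ?_
            refine mul_le_mul_of_nonneg_right ?_ (norm_nonneg _)
            have hjj := hb jj
            rw [dist_eq_norm] at hjj
            calc ‖π j (b jj) - z jj‖ = ‖z jj - π j (b jj)‖ := by rw [norm_sub_rev]
              _ ≤ δ := hjj.le
        _ = δ * ∑ jj, ‖φ j (a i jj)‖ := by rw [Finset.mul_sum]
        _ ≤ δ * C := by
            refine mul_le_mul_of_nonneg_left ?_ hδpos.le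
            have h1 : ∑ jj, ‖φ j (a i jj)‖ ≤ ∑ i' : Fin k, ∑ jj, ‖φ j (a i' jj)‖ :=
              Finset.single_le_sum (f := fun i' => ∑ jj, ‖φ j (a i' jj)‖)
                (fun i' _ => Finset.sum_nonneg fun jj _ => norm_nonneg _) (Finset.mem_univ i)
            rw [hCdef]
            linarith
        _ < ε := by
            have hCne : C ≠ 0 := ne_of_gt hCpos
            have heq : δ * C = ε / 2 := by
              rw [hδdef]; field_simp
            rw [heq]
            linarith
  -- density of the image of global relations in `Rel n`
  have hIdense : ∀ y₀ ∈ Rel n, ∀ ε : ℝ, 0 < ε →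
      ∃ b : Fin k → AA, (∑ i, b i * r i) = 0 ∧ dist (fun i => π n (b i)) y₀ ≤ ε := by
    intro y₀ hy₀ ε hε
    obtain ⟨x, hxmem, hxcoh, hxdist⟩ := mittagLeffler T hTcont
      (fun j => (Rel j).toAddSubgroup) hRelClosed hTS hde n y₀ hy₀ hε
    have hbEx : ∀ i, ∃ bi : AA, ∀ ℓ, π ℓ bi = x ℓ i :=
      fun i => (hlim (fun ℓ => x ℓ i) (fun ℓ => congrFun (hxcoh ℓ) i)).exists
    choose b hbspec using hbEx
    refine ⟨b, ?_, ?_⟩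
    · have hzero : ∀ ℓ, π ℓ (∑ i, b i * r i) = 0 := by
        intro ℓ
        rw [map_sum]
        have hx0 : ∑ i, x ℓ i * π ℓ (r i) = 0 := hxmem ℓ
        calc ∑ i, π ℓ (b i * r i) = ∑ i, x ℓ i * π ℓ (r i) := by
              refine Finset.sum_congr rfl fun i _ => ?_
              rw [map_mul, hbspec i ℓ]
          _ = 0 := hx0
      obtain ⟨a0, _, hu⟩ := hlim (fun ℓ => 0) (fun ℓ => map_zero _)
      rw [hu _ hzero, hu 0 (fun ℓ => map_zero _)]
    · have hfe : (fun i => π n (b i)) = x n := funext fun i => hbspec i n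
      rw [hfe]; exact hxdist
  -- the set of images of global relations, and its span
  let Iset : Set (Fin k → A n) :=
    {v | ∃ b : Fin k → AA, (∑ i, b i * r i) = 0 ∧ v = fun i => π n (b i)}
  have hIsub : Iset ⊆ (Rel n : Set _) := by
    rintro v ⟨b, hb0, rfl⟩
    show ∑ i, π n (b i) * π n (r i) = 0
    calc ∑ i, π n (b i) * π n (r i) = π n (∑ i, b i * r i) := by
          rw [map_sum]
          exact Finset.sum_congr rfl fun i _ => (map_mul _ _ _).symm
      _ = 0 := by rw [hb0, map_zero]
  suffices hmN : m ∈ Submodule.span (A n) Iset by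
    obtain ⟨l, y, g, hsum⟩ := Submodule.mem_span_set'.mp hmN
    have hgI : ∀ j : Fin l, (g j : Fin k → A n) ∈ Iset := fun j => (g j).2
    choose bb hbb0 hbbv using hgI
    refine ⟨l, fun i j => bb j i, y, ?_, ?_⟩
    · intro i
      calc m i = (∑ j, y j • (g j : Fin k → A n)) i := (congrFun hsum i).symm
        _ = ∑ j, y j * (g j : Fin k → A n) i := by
            rw [Finset.sum_apply]
            exact Finset.sum_congr rfl fun j _ => rfl
        _ = ∑ j, y j * π n (bb j i) := by
            refine Finset.sum_congr rfl fun j _ => ?_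
            rw [hbbv j]
    · intro j
      exact hbb0 j
  -- finite generation of Rel n
  obtain ⟨t, u, hu⟩ :=
    Submodule.fg_iff_exists_fin_generating_family.mp (IsNoetherian.noetherian (Rel n))
  have hus : ∀ s, u s ∈ Rel n := fun s => hu ▸ Submodule.subset_span (Set.mem_range_self s)
  -- the continuous K-linear surjection onto Rel n
  let q : (Fin t → A n) →L[K] (Fin k → A n) :=
    { toLinearMap :=
      { toFun := fun w => ∑ s, w s • u s
        map_add' := fun w w' => by simp [add_smul, Finset.sum_add_distrib]
        map_smul' := fun c w => by simp [Finset.smul_sum, smul_assoc] }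
      cont := by
        show Continuous fun w : Fin t → A n => ∑ s, w s • u s
        exact continuous_finset_sum _ fun s _ => (continuous_apply s).smul continuous_const }
  let Jsub : Submodule K (Fin k → A n) := Submodule.restrictScalars K (Rel n)
  have hJc : IsClosed (Jsub : Set (Fin k → A n)) := hRelClosed n
  haveI : CompleteSpace Jsub := hJc.completeSpace_coe
  have hqmem : ∀ w : Fin t → A n, q w ∈ Jsub := by
    intro w
    rw [Submodule.restrictScalars_mem]
    show (∑ s, w s • u s) ∈ Rel n
    exact Submodule.sum_smul_mem (Rel n) _ fun s _ => hus s
  let qr : (Fin t → A n) →L[K] Jsub := q.codRestrict Jsub hqmem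
  have hqrsurj : Function.Surjective qr := by
    rintro ⟨v, hv⟩
    have hv' : v ∈ Submodule.span (A n) (Set.range u) := by rw [hu]; exact hv
    obtain ⟨c, hc⟩ := (Submodule.mem_span_range_iff_exists_fun _).mp hv'
    exact ⟨c, Subtype.ext hc⟩
  obtain ⟨C, hCpos, hC⟩ := qr.exists_preimage_norm_le hqrsurj
  set δ : ℝ := 1 / (2 * C * ((t : ℝ) + 1)) with hδdef
  have hδpos : 0 < δ := by positivity
  -- approximate the generators by images of global relations
  have hpick : ∀ s : Fin t, ∃ b : Fin k → AA, (∑ i, b i * r i) = 0 ∧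
      dist (fun i => π n (b i)) (u s) ≤ δ/2 :=
    fun s => hIdense (u s) (hus s) (δ/2) (by positivity)
  choose bb hbb0 hbbd using hpick
  let v : Fin t → (Fin k → A n) := fun s i => π n (bb s i)
  have hvI : ∀ s, v s ∈ Iset := fun s => ⟨bb s, hbb0 s, rfl⟩
  have hvRel : ∀ s, (u s - v s) ∈ Rel n := fun s => Submodule.sub_mem _ (hus s) (hIsub (hvI s))
  have hwEx : ∀ s : Fin t, ∃ w : Fin t → A n, q w = u s - v s ∧ ‖w‖ ≤ C * (δ/2) := by
    intro s
    obtain ⟨w, hw1, hw2⟩ := hC ⟨u s - v s, hvRel s⟩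
    refine ⟨w, ?_, ?_⟩
    · have h := congrArg Subtype.val hw1
      simpa [qr, ContinuousLinearMap.coe_codRestrict_apply] using h
    · have hnorm : ‖(⟨u s - v s, hvRel s⟩ : Jsub)‖ = ‖u s - v s‖ := rfl
      rw [hnorm] at hw2
      refine hw2.trans ?_
      refine mul_le_mul_of_nonneg_left ?_ hCpos.le
      have := hbbd s
      rw [dist_eq_norm] at this
      calc ‖u s - v s‖ = ‖v s - u s‖ := by rw [norm_sub_rev]
        _ ≤ δ/2 := this
  choose w hwq hwnorm using hwEx
  have hWnorm : ∀ s s', ‖w s s'‖ ≤ C * (δ/2) :=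
    fun s s' => (norm_le_pi_norm (w s) s').trans (hwnorm s)
  -- the contraction operator
  let L : (Fin t → A n) →L[K] (Fin t → A n) :=
    { toLinearMap :=
      { toFun := fun x s => ∑ s', w s s' * x s'
        map_add' := fun x x' => by funext s; simp [mul_add, Finset.sum_add_distrib]
        map_smul' := fun c x => by funext s; simp [Finset.smul_sum, mul_smul_comm] }
      cont := by
        show Continuous fun x : Fin t → A n => (fun s => ∑ s', w s s' * x s')
        exact continuous_pi fun s => continuous_finset_sum _ fun s' _ =>
          continuous_const.mul (continuous_apply s') }
  have hLapp : ∀ (x : Fin t → A n) (s : Fin t), L x s = ∑ s', w s s' * x s' := fun x s => rfl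
  have hLnorm : ‖L‖ < 1 := by
    have hbound : ∀ x : Fin t → A n, ‖L x‖ ≤ ((t : ℝ) * (C * (δ/2))) * ‖x‖ := by
      intro x
      refine (pi_norm_le_iff_of_nonneg (by positivity)).mpr fun s => ?_
      rw [hLapp]
      calc ‖∑ s', w s s' * x s'‖ ≤ ∑ s', ‖w s s' * x s'‖ := norm_sum_le _ _
        _ ≤ ∑ _s' : Fin t, (C * (δ/2)) * ‖x‖ := by
            refine Finset.sum_le_sum fun s' _ => ?_
            refine (norm_mul_le _ _).trans ?_
            exact mul_le_mul (hWnorm s s') (norm_le_pi_norm x s') (norm_nonneg _) (by positivity)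
        _ = ((t : ℝ) * (C * (δ/2))) * ‖x‖ := by
            rw [Finset.sum_const, Finset.card_univ, Fintype.card_fin, nsmul_eq_mul]
            ring
    have hop : ‖L‖ ≤ (t : ℝ) * (C * (δ/2)) :=
      ContinuousLinearMap.opNorm_le_bound L (by positivity) hbound
    refine hop.trans_lt ?_
    have hCne : C ≠ 0 := ne_of_gt hCpos
    have ht1 : (0:ℝ) < (t:ℝ) + 1 := by positivity
    have heq : (t : ℝ) * (C * (δ/2)) = (t : ℝ) / (4 * ((t:ℝ)+1)) := by
      rw [hδdef]; field_simp; ring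
    rw [heq, div_lt_one (by positivity)]
    linarith
  -- invert 1 - L
  let uu : ((Fin t → A n) →L[K] (Fin t → A n))ˣ := Units.oneSub L hLnorm
  let Z : (Fin t → A n) →L[K] (Fin t → A n) := ↑uu⁻¹
  have hval : (uu : (Fin t → A n) →L[K] (Fin t → A n)) = 1 - L := rfl
  have hinvmul : ∀ x : Fin t → A n, Z ((1 - L) x) = x := fun x => by
    have h := congrArg (fun f : (Fin t → A n) →L[K] (Fin t → A n) => f x) uu.inv_mul
    simpa [ContinuousLinearMap.mul_apply, ContinuousLinearMap.one_apply, hval, Z] using h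
  have hmulinv : ∀ x : Fin t → A n, (1 - L) (Z x) = x := fun x => by
    have h := congrArg (fun f : (Fin t → A n) →L[K] (Fin t → A n) => f x) uu.mul_inv
    simpa [ContinuousLinearMap.mul_apply, ContinuousLinearMap.one_apply, hval, Z] using h
  -- Z commutes with the right A n-module structure
  have hright : ∀ (x : Fin t → A n) (c : A n),
      Z (fun s => x s * c) = fun s => Z x s * c := by
    intro x c
    have h1 : ∀ y : Fin t → A n,
        (1 - L) (fun s => y s * c) = fun s => ((1 - L) y) s * c := by
      intro y
      funext s
      simp only [ContinuousLinearMap.sub_apply, ContinuousLinearMap.one_apply, Pi.sub_apply,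
        hLapp, sub_mul, Finset.sum_mul, mul_assoc]
    calc Z (fun s => x s * c) = Z (fun s => ((1 - L) (Z x)) s * c) := by rw [hmulinv x]
      _ = Z ((1 - L) (fun s => Z x s * c)) := by rw [h1]
      _ = fun s => Z x s * c := hinvmul _
  -- matrix of Z
  let e : Fin t → Fin t → A n := fun s' => Pi.single s' (1 : A n)
  have he : ∀ s' sa : Fin t, e s' sa = if sa = s' then 1 else 0 := by
    intro s' sa; simp [e, Pi.single_apply]
  let Zm : Fin t → Fin t → A n := fun s s' => Z (e s') s
  have hZm : ∀ (x : Fin t → A n) (s : Fin t), Z x s = ∑ s', Zm s s' * x s' := by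
    intro x s
    have hx : x = ∑ s' : Fin t, (fun sa => e s' sa * x s') := by
      funext sa
      rw [Finset.sum_apply]
      simp [he]
    conv_lhs => rw [hx]
    rw [map_sum, Finset.sum_apply]
    refine Finset.sum_congr rfl fun s' _ => ?_
    rw [hright (e s') (x s')]
  have hstar : ∀ s a : Fin t, ∑ s', Zm s s' * w s' a = Zm s a - (if s = a then 1 else 0) := by
    intro s a
    have h := hinvmul (e a)
    have h2 : (1 - L) (e a) = fun s' => e a s' - w s' a := by
      funext s'
      simp only [ContinuousLinearMap.sub_apply, ContinuousLinearMap.one_apply, Pi.sub_apply, hLapp]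
      congr 1
      simp [he]
    rw [h2] at h
    have h3 := congrFun h s
    rw [hZm] at h3
    have h4 : ∑ s', Zm s s' * (e a s' - w s' a)
        = Zm s a - ∑ s', Zm s s' * w s' a := by
      simp only [mul_sub]
      rw [Finset.sum_sub_distrib]
      congr 1
      simp [he]
    rw [h4] at h3
    have h5 : e a s = if s = a then 1 else 0 := he a s
    rw [h5] at h3
    rw [← h3]
    abel
  -- each generator is in the span of Iset
  have huspan : ∀ s : Fin t, u s ∈ Submodule.span (A n) Iset := by
    intro s
    have hqw : ∀ s : Fin t, q (w s) = ∑ a, w s a • u a := fun _ => rfl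
    have hvexp : ∀ s' : Fin t, v s' = u s' - ∑ a, w s' a • u a := by
      intro s'
      have h := hwq s'
      rw [hqw] at h
      rw [h]
      abel
    have hclaim : ∑ s', Zm s s' • v s' = u s := by
      calc ∑ s', Zm s s' • v s'
          = ∑ s', Zm s s' • (u s' - ∑ a, w s' a • u a) := by
            refine Finset.sum_congr rfl fun s' _ => ?_
            rw [hvexp s']
        _ = ∑ s', (Zm s s' • u s' - ∑ a, (Zm s s' * w s' a) • u a) := by
            refine Finset.sum_congr rfl fun s' _ => ?_
            rw [smul_sub, Finset.smul_sum]
            congr 1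
            exact Finset.sum_congr rfl fun a _ => by rw [mul_smul]
        _ = ∑ s', Zm s s' • u s' - ∑ a, (∑ s', Zm s s' * w s' a) • u a := by
            rw [Finset.sum_sub_distrib]
            congr 1
            rw [Finset.sum_comm]
            exact Finset.sum_congr rfl fun a _ => by rw [← Finset.sum_smul]
        _ = ∑ s', Zm s s' • u s' - ∑ a, (Zm s a - (if s = a then 1 else 0)) • u a := by
            congr 1
            exact Finset.sum_congr rfl fun a _ => by rw [hstar]
        _ = ∑ a, (if s = a then (1 : A n) else 0) • u a := by
            simp only [sub_smul]
            rw [Finset.sum_sub_distrib]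
            abel
        _ = u s := by simp
    rw [← hclaim]
    exact Submodule.sum_smul_mem _ _ fun s' _ => Submodule.subset_span (hvI s')
  have hfinal : Rel n ≤ Submodule.span (A n) Iset := by
    rw [← hu, Submodule.span_le]
    rintro _ ⟨s, rfl⟩
    exact huspan s
  exact hfinal (show m ∈ Rel n from hm)
end

section
/- Let A be a Fréchet–Stein algebra and I ⊆ A a closed two-sided ideal. Then A/I is again a Fréchet–Stein algebra. -/
open scoped Topology

section RingConLift

variable {R S : Type*} [Ring R] [Ring S]

/-- Lift a ring hom along a `RingCon` quotient. -/
def RingCon.liftHom (c : RingCon R) (f : R →+* S) (H : ∀ a b, c a b → f a = f b) :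
    c.Quotient →+* S where
  toFun := Quotient.lift f fun a b h => H a b h
  map_one' := (f.map_one : _)
  map_mul' := fun x y => Quotient.inductionOn₂ x y fun a b => (f.map_mul a b : _)
  map_zero' := (f.map_zero : _)
  map_add' := fun x y => Quotient.inductionOn₂ x y fun a b => (f.map_add a b : _)

@[simp] lemma RingCon.liftHom_mk' (c : RingCon R) (f : R →+* S) (H) (a : R) :
    c.liftHom f H (c.mk' a) = f a := rfl

end RingConLift


section InducedGeneral

variable {R : Type*} [Ring R] (J : TwoSidedIdeal R)
variable {R' : Type*} [Ring R'] (J' : TwoSidedIdeal R')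

/-- The ring hom induced on quotients by a hom mapping `J` into `J'`. -/
noncomputable def qInduced (f : R →+* R') (hf : ∀ a ∈ J, f a ∈ J') :
    J.ringCon.Quotient →+* J'.ringCon.Quotient :=
  RingCon.liftHom _ ((J'.ringCon.mk').comp f) (fun a b h => by
    have h1 : a - b ∈ J := (J.rel_iff a b).1 h
    have h2 : f a - f b ∈ J' := by rw [← map_sub]; exact hf _ h1
    simp only [RingHom.comp_apply]
    exact Quotient.sound' ((J'.rel_iff (f a) (f b)).2 h2))

@[simp] lemma qInduced_mk (f : R →+* R') (hf) (a : R) :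
    qInduced J J' f hf (J.ringCon.mk' a) = J'.ringCon.mk' (f a) := rfl

end InducedGeneral

section QuotBasic

variable {R : Type*} [Ring R] (J : TwoSidedIdeal R)

/-- `J` as an additive subgroup. -/
def qS : AddSubgroup R where
  carrier := J
  zero_mem' := J.zero_mem
  add_mem' := J.add_mem
  neg_mem' := J.neg_mem

@[simp] lemma mem_qS (a : R) : a ∈ qS J ↔ a ∈ J := Iff.rfl

/-- The additive equivalence between the group quotient and the ring quotient. -/
def qe : (R ⧸ qS J) ≃+ J.ringCon.Quotient where
  toEquiv := Quotient.congrRight (fun a b => by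
    rw [QuotientAddGroup.leftRel_apply]
    constructor
    · intro h
      refine (J.rel_iff a b).2 ?_
      have := J.neg_mem h
      rwa [show (-(-a + b) : R) = a - b by abel] at this
    · intro h
      have := J.neg_mem ((J.rel_iff a b).1 h)
      show -a + b ∈ J
      rwa [show (-a + b : R) = -(a - b) by abel])
  map_add' := fun x y => Quotient.inductionOn₂ x y fun a b => rfl

@[simp] lemma qe_mk (a : R) : qe J ((a : R ⧸ qS J)) = J.ringCon.mk' a := rfl

@[simp] lemma qe_symm_mk (a : R) : (qe J).symm (J.ringCon.mk' a) = (a : R ⧸ qS J) := by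
  rw [← qe_mk J a, AddEquiv.symm_apply_apply]

lemma qmk_surjective : Function.Surjective (J.ringCon.mk') := fun q =>
  Quotient.exists_rep q

lemma qmk_eq_zero_iff (a : R) : J.ringCon.mk' a = 0 ↔ a ∈ J := by
  constructor
  · intro h
    have : (J.ringCon : RingCon R) a 0 := Quotient.exact' h
    simpa using (J.rel_iff a 0).1 this
  · intro h
    have : (J.ringCon : RingCon R) a 0 := (J.rel_iff a 0).2 (by simpa using h)
    exact Quotient.sound' this

end QuotBasic

section QuotBanach

variable {R : Type*} [NormedRing R] (J : TwoSidedIdeal R)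



variable (hJ : IsClosed (J : Set R))

/-- Quotient normed group structure on the ring quotient. -/
@[reducible]
noncomputable def qNACG : NormedAddCommGroup J.ringCon.Quotient :=
  letI : IsClosed ((qS J : Set R)) := hJ
  NormedAddCommGroup.induced _ _ (qe J).symm.toAddMonoidHom (qe J).symm.injective

lemma qnorm_mk (a : R) :
    letI := qNACG J hJ
    ‖J.ringCon.mk' a‖ = ‖(QuotientAddGroup.mk' (qS J) a : R ⧸ qS J)‖ := by
  letI := qNACG J hJ
  change ‖(qe J).symm (J.ringCon.mk' a)‖ = _
  rw [qe_symm_mk]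
  rfl

lemma qrep (x : J.ringCon.Quotient) {r : ℝ}
    (h : (letI := qNACG J hJ; ‖x‖) < r) :
    ∃ a : R, J.ringCon.mk' a = x ∧ ‖a‖ < r := by
  letI := qNACG J hJ
  letI : IsClosed ((qS J : Set R)) := hJ
  have h' : ‖(qe J).symm x‖ < r := h
  obtain ⟨m, hm, hmr⟩ := QuotientAddGroup.norm_lt_iff.1 h'
  refine ⟨m, ?_, hmr⟩
  have := congrArg (qe J) hm
  rwa [qe_mk, AddEquiv.apply_symm_apply] at this

lemma qnorm_mk_le (a : R) :
    (letI := qNACG J hJ; ‖J.ringCon.mk' a‖) ≤ ‖a‖ := by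
  letI : IsClosed ((qS J : Set R)) := hJ
  rw [qnorm_mk J hJ a]
  exact QuotientAddGroup.norm_mk_le_norm

lemma le_mul_of_forall_add {a b c : ℝ} (h : ∀ ε : ℝ, 0 < ε → a ≤ (b + ε) * (c + ε)) :
    a ≤ b * c := by
  have t : Filter.Tendsto (fun ε : ℝ => (b + ε) * (c + ε)) (𝓝[>] 0) (𝓝 (b * c)) := by
    have t0 : Filter.Tendsto (fun ε : ℝ => (b + ε) * (c + ε)) (𝓝 0) (𝓝 ((b + 0) * (c + 0))) := by
      exact ((continuous_const.add continuous_id).mul (continuous_const.add continuous_id)).tendsto 0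
    simpa using t0.mono_left nhdsWithin_le_nhds
  exact ge_of_tendsto t (Filter.eventually_of_mem self_mem_nhdsWithin fun ε hε => h ε hε)

/-- Quotient normed ring structure. -/
@[reducible]
noncomputable def qNR : NormedRing J.ringCon.Quotient :=
  letI := qNACG J hJ
  { (inferInstance : NormedAddCommGroup J.ringCon.Quotient),
    (inferInstance : Ring J.ringCon.Quotient) with
    norm_mul_le := by
      intro x y
      letI := qNACG J hJ
      apply le_mul_of_forall_add
      intro ε hε
      obtain ⟨a, ha, har⟩ := qrep J hJ x (lt_add_of_pos_right _ hε)
      obtain ⟨b, hb, hbr⟩ := qrep J hJ y (lt_add_of_pos_right _ hε)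
      have hxy : J.ringCon.mk' (a * b) = x * y := by rw [map_mul, ha, hb]
      calc ‖x * y‖ = ‖J.ringCon.mk' (a * b)‖ := by rw [hxy]
        _ ≤ ‖a * b‖ := qnorm_mk_le J hJ _
        _ ≤ ‖a‖ * ‖b‖ := norm_mul_le a b
        _ ≤ (‖x‖ + ε) * (‖y‖ + ε) := by
            apply mul_le_mul (le_of_lt har) (le_of_lt hbr) (norm_nonneg b)
            positivity }

lemma qComplete [CompleteSpace R] :
    letI := qNR J hJ; CompleteSpace J.ringCon.Quotient := by
  letI := qNR J hJ
  letI : IsClosed ((qS J : Set R)) := hJ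
  have iso : J.ringCon.Quotient ≃ᵢ (R ⧸ qS J) :=
    { toEquiv := (qe J).symm.toEquiv
      isometry_toFun := Isometry.of_dist_eq fun x y => rfl }
  exact iso.completeSpace

lemma qNoetherian [IsNoetherianRing R] : IsNoetherianRing J.ringCon.Quotient :=
  isNoetherianRing_of_surjective R _ (J.ringCon.mk') (qmk_surjective J)


lemma le_mul_of_forall_add' {a b c : ℝ} (h : ∀ ε : ℝ, 0 < ε → a ≤ b * (c + ε)) :
    a ≤ b * c := by
  have t : Filter.Tendsto (fun ε : ℝ => b * (c + ε)) (𝓝[>] 0) (𝓝 (b * c)) := by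
    have t0 : Filter.Tendsto (fun ε : ℝ => b * (c + ε)) (𝓝 0) (𝓝 (b * (c + 0))) :=
      (continuous_const.mul (continuous_const.add continuous_id)).tendsto 0
    simpa using t0.mono_left nhdsWithin_le_nhds
  exact ge_of_tendsto t (Filter.eventually_of_mem self_mem_nhdsWithin fun ε hε => h ε hε)

section Alg

variable {K : Type*} [NontriviallyNormedField K] [NormedAlgebra K R]

/-- Algebra structure on the quotient. -/
noncomputable def qAlg : Algebra K J.ringCon.Quotient :=
  RingHom.toAlgebra' ((J.ringCon.mk').comp (algebraMap K R)) (by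
    intro c x
    induction x using Quotient.inductionOn with
    | h b =>
      show J.ringCon.mk' (algebraMap K R c) * J.ringCon.mk' b
          = J.ringCon.mk' b * J.ringCon.mk' (algebraMap K R c)
      rw [← map_mul, ← map_mul, Algebra.commutes])

noncomputable def qNormedAlgebra :
    letI := qNR J hJ
    letI := qAlg (K := K) J
    NormedAlgebra K J.ringCon.Quotient := by
  letI := qNR J hJ
  letI := qAlg (K := K) J
  refine ⟨fun k x => ?_⟩
  rw [Algebra.smul_def]
  apply le_mul_of_forall_add'
  intro ε hε
  obtain ⟨a, ha, har⟩ := qrep J hJ x (lt_add_of_pos_right _ hε)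
  have halg : (algebraMap K J.ringCon.Quotient) k = J.ringCon.mk' ((algebraMap K R) k) := rfl
  calc ‖(algebraMap K J.ringCon.Quotient) k * x‖
      = ‖J.ringCon.mk' ((algebraMap K R) k * a)‖ := by rw [halg, ← ha, ← map_mul]
    _ ≤ ‖(algebraMap K R) k * a‖ := qnorm_mk_le J hJ _
    _ = ‖k • a‖ := by rw [Algebra.smul_def]
    _ ≤ ‖k‖ * ‖a‖ := norm_smul_le k a
    _ ≤ ‖k‖ * (‖x‖ + ε) := by
        apply mul_le_mul_of_nonneg_left (le_of_lt har) (norm_nonneg k)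

end Alg

lemma qmk_continuous :
    letI := qNR J hJ
    Continuous (J.ringCon.mk') := by
  letI := qNR J hJ
  refine (LipschitzWith.of_dist_le_mul (K := 1) fun a b => ?_).continuous
  simp only [NNReal.coe_one, one_mul, dist_eq_norm, ← map_sub]
  exact qnorm_mk_le J hJ _

section Induced

variable {R' : Type*} [NormedRing R'] (J' : TwoSidedIdeal R')

lemma qInduced_continuous (hJ' : IsClosed (J' : Set R')) (f : R →+* R')
    (hf : ∀ a ∈ J, f a ∈ J') (hcf : Continuous f) :
    letI := qNR J hJ
    letI := qNR J' hJ'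
    Continuous (qInduced J J' f hf) := by
  letI := qNR J hJ
  letI := qNR J' hJ'
  apply continuous_of_continuousAt_zero (qInduced J J' f hf : J.ringCon.Quotient →+ J'.ringCon.Quotient)
  rw [ContinuousAt, map_zero]
  rw [Metric.tendsto_nhds_nhds]
  intro ε hε
  have hc0 : ContinuousAt f 0 := hcf.continuousAt
  rw [ContinuousAt, map_zero, Metric.tendsto_nhds_nhds] at hc0
  obtain ⟨δ, hδ, hδ'⟩ := hc0 ε hε
  refine ⟨δ, hδ, ?_⟩
  intro x hx
  rw [dist_zero_right] at hx
  obtain ⟨a, ha, har⟩ := qrep J hJ x hx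
  have : dist (f a) 0 < ε := hδ' (by rwa [dist_zero_right])
  rw [dist_zero_right] at this
  rw [← ha, dist_zero_right]
  calc ‖qInduced J J' f hf (J.ringCon.mk' a)‖ = ‖J'.ringCon.mk' (f a)‖ := rfl
    _ ≤ ‖f a‖ := qnorm_mk_le J' hJ' _
    _ < ε := this

end Induced

end QuotBanach

open scoped Topology
open Filter

/-- Entrywise geometric series: a matrix `1 - M` with small entries has a left inverse. -/
lemma matrix_left_inverse_of_small {A : Type*} [NormedRing A] [CompleteSpace A] {m : ℕ}
    (M : Matrix (Fin m) (Fin m) A) {r : ℝ} (hr0 : 0 ≤ r) (hc : (m : ℝ) * r < 1)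
    (hM : ∀ i j, ‖M i j‖ ≤ r) :
    ∃ B : Matrix (Fin m) (Fin m) A, B * (1 - M) = 1 := by
  set c : ℝ := (m : ℝ) * r with hc_def
  have hc0 : 0 ≤ c := mul_nonneg (Nat.cast_nonneg m) hr0
  set Cst : ℝ := ‖(1 : A)‖ + 1 with hCst_def
  have hCst0 : 0 < Cst := by positivity
  have pow_bound : ∀ p : ℕ, ∀ i j, ‖(M ^ p) i j‖ ≤ Cst * c ^ p := by
    intro p
    induction p with
    | zero =>
      intro i j
      simp only [pow_zero, mul_one]
      rw [Matrix.one_apply]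
      by_cases h : i = j
      · simp only [if_pos h]; rw [hCst_def]; linarith
      · simp only [if_neg h, norm_zero]; linarith
    | succ p ih =>
      intro i j
      have : (M ^ (p + 1)) i j = ∑ k, (M ^ p) i k * M k j := by
        rw [pow_succ]; rfl
      rw [this]
      calc ‖∑ k, (M ^ p) i k * M k j‖ ≤ ∑ k, ‖(M ^ p) i k * M k j‖ := norm_sum_le _ _
        _ ≤ ∑ _k : Fin m, (Cst * c ^ p) * r := by
            apply Finset.sum_le_sum
            intro k _
            calc ‖(M ^ p) i k * M k j‖ ≤ ‖(M ^ p) i k‖ * ‖M k j‖ := norm_mul_le _ _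
              _ ≤ (Cst * c ^ p) * r := by
                  apply mul_le_mul (ih i k) (hM k j) (norm_nonneg _)
                  positivity
        _ = Cst * c ^ (p + 1) := by
            rw [Finset.sum_const, Finset.card_univ, Fintype.card_fin]
            push_cast [hc_def]
            ring
  set S : ℕ → Matrix (Fin m) (Fin m) A := fun p => ∑ q ∈ Finset.range p, M ^ q with hS
  have hcauchy : ∀ i j, CauchySeq fun p => (S p) i j := by
    intro i j
    apply cauchySeq_of_le_geometric c Cst hc
    intro p
    rw [dist_eq_norm]
    have : (S p) i j - (S (p + 1)) i j = -((M ^ p) i j) := by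
      rw [hS]; simp [Finset.sum_range_succ, Matrix.add_apply]
    rw [this, norm_neg]
    exact pow_bound p i j
  have hlim : ∀ i j, ∃ L : A, Tendsto (fun p => (S p) i j) atTop (𝓝 L) := by
    intro i j
    exact cauchySeq_tendsto_of_complete (hcauchy i j)
  choose B0 hB using hlim
  set B : Matrix (Fin m) (Fin m) A := Matrix.of B0 with hBdef
  have hB : ∀ i j, Tendsto (fun p => (S p) i j) atTop (𝓝 (B i j)) := hB
  refine ⟨B, ?_⟩
  ext i j
  have h1 : Tendsto (fun p => (S p * (1 - M)) i j) atTop (𝓝 ((B * (1 - M)) i j)) := by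
    have : ∀ p, (S p * (1 - M)) i j = ∑ k, (S p) i k * (1 - M) k j := fun p => rfl
    simp only [this]
    have : (B * (1 - M)) i j = ∑ k, B i k * (1 - M) k j := rfl
    rw [this]
    apply tendsto_finset_sum
    intro k _
    exact (hB i k).mul tendsto_const_nhds
  have h2 : ∀ p, (S p * (1 - M)) i j = (1 : Matrix (Fin m) (Fin m) A) i j - (M ^ p) i j := by
    intro p
    have key : S p * (1 - M) = 1 - M ^ p := by
      have := geom_sum_mul M p
      rw [hS]
      calc (∑ q ∈ Finset.range p, M ^ q) * (1 - M)
          = -((∑ q ∈ Finset.range p, M ^ q) * (M - 1)) := by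
            rw [mul_sub, mul_sub, mul_one]
            abel
        _ = -(M ^ p - 1) := by rw [this]
        _ = 1 - M ^ p := neg_sub _ _
    rw [key, Matrix.sub_apply]
  have h3 : Tendsto (fun p => (1 : Matrix (Fin m) (Fin m) A) i j - (M ^ p) i j) atTop
      (𝓝 ((1 : Matrix (Fin m) (Fin m) A) i j - 0)) := by
    apply Tendsto.sub tendsto_const_nhds
    apply squeeze_zero_norm (fun p => pow_bound p i j)
    have := tendsto_pow_atTop_nhds_zero_of_lt_one hc0 hc
    simpa using this.const_mul Cst
  simp only [h2] at h1
  have := tendsto_nhds_unique h1 h3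
  rw [this, sub_zero]

/-- In a noetherian Banach algebra over a complete-enough normed field, every
left ideal is closed. -/
theorem submodule_isClosed {K : Type*} [NontriviallyNormedField K]
    {A : Type*} [NormedRing A] [NormedAlgebra K A] [CompleteSpace A] [IsNoetherianRing A]
    (N : Submodule A A) : IsClosed (N : Set A) := by
  letI : ContinuousSMul A A := ⟨continuous_mul⟩
  set C : Submodule A A := N.topologicalClosure with hC
  have hCclosed : IsClosed (C : Set A) := N.isClosed_topologicalClosure
  have hCcoe : (C : Set A) = closure (N : Set A) := rfl
  obtain ⟨m, x, hx⟩ := Submodule.fg_iff_exists_fin_generating_family.1 (IsNoetherian.noetherian C)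
  suffices hsub : ∀ i, x i ∈ N by
    have hCN : (C : Set A) ⊆ (N : Set A) := by
      intro c hc
      rw [← hx] at hc
      have : Submodule.span A (Set.range x) ≤ N := by
        rw [Submodule.span_le]
        rintro _ ⟨i, rfl⟩
        exact hsub i
      exact this hc
    have : (N : Set A) = (C : Set A) :=
      Set.Subset.antisymm (N.le_topologicalClosure) hCN
    rw [this]; exact hCclosed
  -- the Banach space of the closure
  have hxC : ∀ i, x i ∈ C := by
    intro i
    rw [← hx]
    exact Submodule.subset_span ⟨i, rfl⟩
  set CK : Submodule K A := C.restrictScalars K with hCK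
  haveI : CompleteSpace CK := hCclosed.isComplete.completeSpace_coe
  -- the continuous linear surjection
  have hmem : ∀ a : Fin m → A, (∑ i, a i * x i) ∈ CK := by
    intro a
    apply Submodule.sum_mem
    intro i _
    exact C.smul_mem (a i) (hxC i)
  set ulin : (Fin m → A) →ₗ[K] CK :=
    { toFun := fun a => ⟨∑ i, a i * x i, hmem a⟩
      map_add' := by
        intro a b
        apply Subtype.ext
        simp [add_mul, Finset.sum_add_distrib]
      map_smul' := by
        intro k a
        apply Subtype.ext
        simp only [RingHom.id_apply, SetLike.val_smul]
        rw [Finset.smul_sum]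
        congr 1
        funext i
        rw [Pi.smul_apply, smul_mul_assoc] } with hulin
  have hucont : Continuous ulin := by
    apply Continuous.subtype_mk
    apply continuous_finset_sum
    intro i _
    exact (continuous_apply i).mul continuous_const
  set u : (Fin m → A) →L[K] CK := ⟨ulin, hucont⟩ with hu
  have husurj : Function.Surjective u := by
    intro c
    have hc : (c : A) ∈ Submodule.span A (Set.range x) := by
      rw [hx]; exact c.2
    rw [Submodule.mem_span_range_iff_exists_fun] at hc
    obtain ⟨a, ha⟩ := hc
    refine ⟨a, ?_⟩
    apply Subtype.ext
    show ∑ i, a i * x i = (c : A)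
    simpa [smul_eq_mul] using ha
  have hopen : IsOpenMap u := ContinuousLinearMap.isOpenMap u husurj
  -- choose δ from openness
  set r : ℝ := 1 / (m + 1) with hr
  have hr0 : 0 < r := by positivity
  have h0mem : (0 : CK) ∈ u '' Metric.ball 0 r := ⟨0, Metric.mem_ball_self hr0, map_zero u⟩
  obtain ⟨δ, hδ0, hδ⟩ := Metric.isOpen_iff.1 (hopen _ Metric.isOpen_ball) 0 h0mem
  -- approximate generators by elements of N
  have happrox : ∀ i, ∃ j ∈ (N : Set A), dist (x i) j < δ := by
    intro i
    have : x i ∈ closure (N : Set A) := by rw [← hCcoe]; exact hxC i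
    exact Metric.mem_closure_iff.1 this δ hδ0
  choose jj hjN hjd using happrox
  -- get small coefficient vectors
  have hyC : ∀ i, x i - jj i ∈ CK := fun i =>
    Submodule.sub_mem _ (hxC i) (N.le_topologicalClosure (hjN i))
  have hsmall : ∀ i, (⟨x i - jj i, hyC i⟩ : CK) ∈ Metric.ball (0 : CK) δ := by
    intro i
    rw [Metric.mem_ball, dist_zero_right]
    show ‖x i - jj i‖ < δ
    rw [← dist_eq_norm]
    exact hjd i
  have hcoeff : ∀ i, ∃ a : Fin m → A, a ∈ Metric.ball (0 : Fin m → A) r ∧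
      u a = ⟨x i - jj i, hyC i⟩ := by
    intro i
    obtain ⟨a, ha, hau⟩ := hδ (hsmall i)
    exact ⟨a, ha, hau⟩
  choose av hav hauv using hcoeff
  -- the matrix
  set M : Matrix (Fin m) (Fin m) A := Matrix.of (fun i k => av i k) with hM
  have hMentry : ∀ i k, ‖M i k‖ ≤ r := by
    intro i k
    have h1 : ‖av i‖ < r := by
      have := hav i
      rwa [Metric.mem_ball, dist_zero_right] at this
    exact le_of_lt (lt_of_le_of_lt (norm_le_pi_norm (av i) k) h1)
  have hmr : (m : ℝ) * r < 1 := by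
    rw [hr]
    rw [div_eq_mul_inv, one_mul]
    rw [mul_inv_lt_iff₀ (by positivity)]
    push_cast; linarith
  obtain ⟨B, hB⟩ := matrix_left_inverse_of_small M (le_of_lt hr0) hmr hMentry
  -- the key relation : (1 - M).mulVec x = jj
  have hrel : (1 - M).mulVec x = jj := by
    funext i
    have h1 : (∑ k, av i k * x k) = x i - jj i := congrArg Subtype.val (hauv i)
    have h2 : (1 - M).mulVec x i = x i - ∑ k, M i k * x k := by
      rw [Matrix.sub_mulVec, Matrix.one_mulVec]
      rfl
    rw [h2]
    have h3 : (∑ k, M i k * x k) = x i - jj i := h1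
    rw [h3]
    abel
  have hxB : ∀ i, x i = ∑ k, B i k * jj k := by
    intro i
    have : B.mulVec ((1 - M).mulVec x) = x := by
      rw [Matrix.mulVec_mulVec, hB, Matrix.one_mulVec]
    rw [hrel] at this
    have := congrFun this i
    rw [← this]
    rfl
  intro i
  rw [hxB i]
  apply Submodule.sum_mem
  intro k _
  have := N.smul_mem (B i k) (hjN k)
  simpa [smul_eq_mul] using this



/-- A Fréchet–Stein presentation of the ring `S`: `S` is the projective limit of left
noetherian `K`-Banach algebras `A n` along continuous right-flat transition maps, with
dense images. -/
structure FSPresentation (K : Type) [NontriviallyNormedField K] (S : Type) [Ring S] where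
  A : ℕ → Type
  [ring : ∀ n, NormedRing (A n)]
  [alg : ∀ n, NormedAlgebra K (A n)]
  [complete : ∀ n, CompleteSpace (A n)]
  noeth : ∀ n, IsNoetherianRing (A n)
  φ : ∀ n, A (n+1) →+* A n
  φcont : ∀ n, Continuous (φ n)
  flat : ∀ n, RightFlatRingHom (φ n)
  π : ∀ n, S →+* A n
  compat : ∀ n a, φ n (π (n+1) a) = π n a
  dense : ∀ n, DenseRange (π n)
  lim : ∀ x : ∀ n, A n, (∀ n, φ n (x (n+1)) = x n) → ∃! s : S, ∀ n, π n s = x n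

attribute [instance] FSPresentation.ring FSPresentation.alg FSPresentation.complete

/-!
STATEMENT 10: Let `A` be a Fréchet–Stein algebra and `I ⊆ A` a closed two-sided ideal.
Then `A/I` is again a Fréchet–Stein algebra.  Closedness is with respect to the Fréchet
(projective limit) topology of the presentation.
-/

namespace FSMain

variable {K : Type} [NontriviallyNormedField K]
variable {AA : Type} [Ring AA] (P : FSPresentation K AA) (I : TwoSidedIdeal AA)

/-- The image of `I` at level `n`. -/
def piI (n : ℕ) : Set (P.A n) := (P.π n) '' (I : Set AA)

/-- The closed two-sided ideal at level `n`. -/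
def Jn (n : ℕ) : TwoSidedIdeal (P.A n) :=
  TwoSidedIdeal.mk' (closure (piI P I n))
    (subset_closure ⟨0, I.zero_mem, map_zero _⟩)
    (by
      intro x y hx hy
      have h1 : (x, y) ∈ closure ((piI P I n) ×ˢ (piI P I n)) := by
        rw [closure_prod_eq]; exact ⟨hx, hy⟩
      have h2 := image_closure_subset_closure_image
        (f := fun p : P.A n × P.A n => p.1 + p.2) (continuous_add) (Set.mem_image_of_mem _ h1)
      refine closure_mono ?_ h2
      rintro _ ⟨⟨u, v⟩, ⟨⟨a, ha, rfl⟩, ⟨b, hb, rfl⟩⟩, rfl⟩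
      exact ⟨a + b, I.add_mem ha hb, by simp⟩)
    (by
      intro x hx
      have h2 := image_closure_subset_closure_image
        (f := fun p : P.A n => -p) (continuous_neg) (Set.mem_image_of_mem _ hx)
      refine closure_mono ?_ h2
      rintro _ ⟨_, ⟨a, ha, rfl⟩, rfl⟩
      exact ⟨-a, I.neg_mem ha, by simp⟩)
    (by
      intro x y hy
      have hx : x ∈ closure (Set.range (P.π n)) := P.dense n x
      have h1 : (x, y) ∈ closure ((Set.range (P.π n)) ×ˢ (piI P I n)) := by
        rw [closure_prod_eq]; exact ⟨hx, hy⟩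
      have h2 := image_closure_subset_closure_image
        (f := fun p : P.A n × P.A n => p.1 * p.2) (continuous_mul) (Set.mem_image_of_mem _ h1)
      refine closure_mono ?_ h2
      rintro _ ⟨⟨u, v⟩, ⟨⟨a, rfl⟩, ⟨b, hb, rfl⟩⟩, rfl⟩
      exact ⟨a * b, I.mul_mem_left a b hb, by simp⟩)
    (by
      intro x y hx
      have hy : y ∈ closure (Set.range (P.π n)) := P.dense n y
      have h1 : (x, y) ∈ closure ((piI P I n) ×ˢ (Set.range (P.π n))) := by
        rw [closure_prod_eq]; exact ⟨hx, hy⟩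
      have h2 := image_closure_subset_closure_image
        (f := fun p : P.A n × P.A n => p.1 * p.2) (continuous_mul) (Set.mem_image_of_mem _ h1)
      refine closure_mono ?_ h2
      rintro _ ⟨⟨u, v⟩, ⟨⟨a, ha, rfl⟩, ⟨b, rfl⟩⟩, rfl⟩
      exact ⟨a * b, I.mul_mem_right a b ha, by simp⟩)

lemma mem_Jn {n : ℕ} {a : P.A n} : a ∈ Jn P I n ↔ a ∈ closure (piI P I n) := by
  rw [Jn, TwoSidedIdeal.mem_mk']

lemma Jn_closed (n : ℕ) : IsClosed ((Jn P I n : Set (P.A n))) := by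
  have : (Jn P I n : Set (P.A n)) = closure (piI P I n) := by
    ext a; exact mem_Jn P I
  rw [this]; exact isClosed_closure

lemma piI_subset_Jn (n : ℕ) : piI P I n ⊆ (Jn P I n : Set (P.A n)) :=
  fun _ h => (mem_Jn P I).2 (subset_closure h)

lemma phi_maps_Jn (n : ℕ) : ∀ a ∈ Jn P I (n+1), P.φ n a ∈ Jn P I n := by
  intro a ha
  rw [mem_Jn] at ha ⊢
  have h2 := image_closure_subset_closure_image (P.φcont n) (Set.mem_image_of_mem _ ha)
  refine closure_mono ?_ h2
  rintro _ ⟨_, ⟨b, hb, rfl⟩, rfl⟩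
  exact ⟨b, hb, (P.compat n b).symm⟩

lemma pi_maps_I (n : ℕ) : ∀ a ∈ I, P.π n a ∈ Jn P I n :=
  fun a ha => piI_subset_Jn P I n ⟨a, ha, rfl⟩

/-- Quotient Banach algebra at level `n`. -/
@[reducible]
noncomputable def bR (n : ℕ) : NormedRing (Jn P I n).ringCon.Quotient :=
  qNR _ (Jn_closed P I n)

noncomputable def bAlg (n : ℕ) : Algebra K (Jn P I n).ringCon.Quotient :=
  qAlg (Jn P I n)

/-- Transition maps on the quotients. -/
noncomputable def phibar (n : ℕ) :
    (Jn P I (n+1)).ringCon.Quotient →+* (Jn P I n).ringCon.Quotient :=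
  qInduced _ _ (P.φ n) (phi_maps_Jn P I n)

/-- Projection maps on the quotients. -/
noncomputable def pibar (n : ℕ) :
    I.ringCon.Quotient →+* (Jn P I n).ringCon.Quotient :=
  qInduced _ _ (P.π n) (pi_maps_I P I n)

lemma bcompat (n : ℕ) (q : I.ringCon.Quotient) :
    phibar P I n (pibar P I (n+1) q) = pibar P I n q := by
  induction q using Quotient.inductionOn with
  | h a =>
    show (Jn P I n).ringCon.mk' (P.φ n (P.π (n+1) a)) = (Jn P I n).ringCon.mk' (P.π n a)
    rw [P.compat]

lemma bdense (n : ℕ) :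
    letI := bR P I n
    DenseRange (pibar P I n) := by
  letI := bR P I n
  rw [Metric.denseRange_iff]
  intro x r hr
  obtain ⟨a, ha⟩ := qmk_surjective (Jn P I n) x
  obtain ⟨y, hy⟩ := Metric.denseRange_iff.1 (P.dense n) a r hr
  refine ⟨I.ringCon.mk' y, ?_⟩
  have : pibar P I n (I.ringCon.mk' y) = (Jn P I n).ringCon.mk' (P.π n y) := rfl
  rw [this, ← ha, dist_eq_norm, ← map_sub]
  calc ‖(Jn P I n).ringCon.mk' (a - P.π n y)‖ ≤ ‖a - P.π n y‖ :=
        qnorm_mk_le _ (Jn_closed P I n) _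
    _ < r := by rwa [dist_eq_norm] at hy


lemma bflat (n : ℕ) : RightFlatRingHom (phibar P I n) := by
  haveI := P.noeth n
  haveI := P.noeth (n+1)
  intro k r m hrel
  choose rv hrv using fun i => qmk_surjective (Jn P I (n+1)) (r i)
  choose mv hmv using fun i => qmk_surjective (Jn P I n) (m i)
  set t : P.A n := ∑ i, mv i * P.φ n (rv i) with ht
  have htJ : t ∈ Jn P I n := by
    rw [← qmk_eq_zero_iff]
    have hmk : (Jn P I n).ringCon.mk' t = ∑ i, m i * phibar P I n (r i) := by
      rw [ht, map_sum]
      refine Finset.sum_congr rfl fun i _ => ?_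
      rw [map_mul, hmv i, ← hrv i]
      rfl
    rw [hmk, hrel]
  set L : Submodule (P.A (n+1)) (P.A (n+1)) :=
    { carrier := (Jn P I (n+1) : Set (P.A (n+1)))
      add_mem' := fun h1 h2 => (Jn P I (n+1)).add_mem h1 h2
      zero_mem' := (Jn P I (n+1)).zero_mem
      smul_mem' := fun c x h => by
        simpa [smul_eq_mul] using (Jn P I (n+1)).mul_mem_left c x h } with hL
  obtain ⟨G, g, hg⟩ := Submodule.fg_iff_exists_fin_generating_family.1 (IsNoetherian.noetherian L)
  have hgJ : ∀ q, g q ∈ Jn P I (n+1) := by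
    intro q
    have : g q ∈ L := hg ▸ Submodule.subset_span ⟨q, rfl⟩
    exact this
  set NN : Submodule (P.A n) (P.A n) :=
    Submodule.span (P.A n) (Set.range fun q => P.φ n (g q)) with hNN
  have hNNclosed : IsClosed (NN : Set (P.A n)) := submodule_isClosed (K := K) NN
  have hphiL : ∀ v ∈ L, P.φ n v ∈ NN := by
    intro v hv
    rw [← hg, Submodule.mem_span_range_iff_exists_fun] at hv
    obtain ⟨c, hc⟩ := hv
    rw [← hc, map_sum]
    apply Submodule.sum_mem
    intro q _
    rw [smul_eq_mul, map_mul]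
    have := NN.smul_mem (P.φ n (c q)) (Submodule.subset_span ⟨q, rfl⟩)
    simpa [smul_eq_mul] using this
  have hJN : (Jn P I n : Set (P.A n)) ⊆ (NN : Set (P.A n)) := by
    have h1 : piI P I n ⊆ (NN : Set (P.A n)) := by
      rintro _ ⟨a, ha, rfl⟩
      rw [show P.π n a = P.φ n (P.π (n+1) a) from (P.compat n a).symm]
      exact hphiL _ (show P.π (n+1) a ∈ L from pi_maps_I P I (n+1) a ha)
    intro z hz
    exact closure_minimal h1 hNNclosed ((mem_Jn P I).1 hz)
  have htNN : t ∈ NN := hJN htJ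
  rw [hNN, Submodule.mem_span_range_iff_exists_fun] at htNN
  obtain ⟨c, hc⟩ := htNN
  set bigR : Fin (k + G) → P.A (n+1) := Fin.append rv (fun q => -(g q)) with hbigR
  set bigM : Fin (k + G) → P.A n := Fin.append mv c with hbigM
  have hbig : ∑ i, bigM i * P.φ n (bigR i) = 0 := by
    rw [Fin.sum_univ_add]
    have e1 : ∀ i : Fin k, bigM (Fin.castAdd G i) * P.φ n (bigR (Fin.castAdd G i))
        = mv i * P.φ n (rv i) := by
      intro i
      rw [hbigM, hbigR, Fin.append_left, Fin.append_left]
    have e2 : ∀ q : Fin G, bigM (Fin.natAdd k q) * P.φ n (bigR (Fin.natAdd k q))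
        = -(c q * P.φ n (g q)) := by
      intro q
      rw [hbigM, hbigR, Fin.append_right, Fin.append_right, map_neg, mul_neg]
    rw [Finset.sum_congr rfl (fun i _ => e1 i), Finset.sum_congr rfl (fun q _ => e2 q)]
    have e3 : ∑ q, -(c q * P.φ n (g q)) = -t := by
      rw [← hc, ← Finset.sum_neg_distrib]
      refine Finset.sum_congr rfl fun q _ => ?_
      rw [smul_eq_mul]
    rw [e3, ← ht, add_neg_cancel]
  obtain ⟨l, a, y, hy, ha⟩ := P.flat n (k + G) bigR bigM hbig
  refine ⟨l, fun i j => (Jn P I (n+1)).ringCon.mk' (a (Fin.castAdd G i) j),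
    fun j => (Jn P I n).ringCon.mk' (y j), ?_, ?_⟩
  · intro i
    have h1 : m i = (Jn P I n).ringCon.mk' (bigM (Fin.castAdd G i)) := by
      rw [hbigM, Fin.append_left, hmv]
    rw [h1, hy (Fin.castAdd G i), map_sum]
    refine Finset.sum_congr rfl fun j _ => ?_
    rw [map_mul]
    rfl
  · intro j
    have h0 : ∑ i : Fin k, a (Fin.castAdd G i) j * rv i ∈ Jn P I (n+1) := by
      have haj := ha j
      rw [Fin.sum_univ_add] at haj
      have e2 : ∀ q : Fin G, a (Fin.natAdd k q) j * bigR (Fin.natAdd k q)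
          = -(a (Fin.natAdd k q) j * g q) := by
        intro q
        rw [hbigR, Fin.append_right, mul_neg]
      rw [Finset.sum_congr rfl (fun q _ => e2 q), Finset.sum_neg_distrib] at haj
      have e1 : ∀ i : Fin k, a (Fin.castAdd G i) j * bigR (Fin.castAdd G i)
          = a (Fin.castAdd G i) j * rv i := by
        intro i
        rw [hbigR, Fin.append_left]
      rw [Finset.sum_congr rfl (fun i _ => e1 i)] at haj
      have heq : ∑ i : Fin k, a (Fin.castAdd G i) j * rv i
          = ∑ q, a (Fin.natAdd k q) j * g q := by
        rw [← sub_eq_add_neg] at haj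
        exact sub_eq_zero.1 haj
      rw [heq]
      exact sum_mem fun q _ => (Jn P I (n+1)).mul_mem_left _ _ (hgJ q)
    have hmk : ∑ i : Fin k, (Jn P I (n+1)).ringCon.mk' (a (Fin.castAdd G i) j) * r i
        = (Jn P I (n+1)).ringCon.mk' (∑ i : Fin k, a (Fin.castAdd G i) j * rv i) := by
      rw [map_sum]
      refine Finset.sum_congr rfl fun i _ => ?_
      rw [map_mul, hrv i]
    rw [hmk, qmk_eq_zero_iff]
    exact h0

/-- Transport along an equality of indices. -/
def AEq {a b : ℕ} (h : a = b) : P.A a →+* P.A b := by subst h; exact RingHom.id _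

lemma AEq_self {a : ℕ} (h : a = a) (w : P.A a) : AEq P h w = w := rfl

lemma AEq_fam (f : ∀ n, P.A n) {a b : ℕ} (h : a = b) : AEq P h (f a) = f b := by
  subst h; rfl

lemma AEq_pi {a b : ℕ} (h : a = b) (s : AA) : AEq P h (P.π a s) = P.π b s :=
  AEq_fam P (fun n => P.π n s) h

lemma AEq_J {a b : ℕ} (h : a = b) {w : P.A a} (hw : w ∈ Jn P I a) :
    AEq P h w ∈ Jn P I b := by subst h; exact hw

lemma AEq_cont {a b : ℕ} (h : a = b) : Continuous (AEq P h) := by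
  subst h; exact continuous_id

lemma AEq_phi {a b : ℕ} (hab : a = b) (h1 : a + 1 = b + 1) (w : P.A (a+1)) :
    AEq P hab (P.φ a w) = P.φ b (AEq P h1 w) := by subst hab; rfl

/-- Iterated transition maps. -/
def down (p : ℕ) : (k : ℕ) → (P.A (p + k) →+* P.A p)
  | 0 => RingHom.id _
  | (k+1) => (down p k).comp (P.φ (p + k))

lemma down_cont (p : ℕ) : ∀ k, Continuous (down P p k) := by
  intro k
  induction k with
  | zero => exact continuous_id
  | succ k ih => exact ih.comp (P.φcont (p + k))

lemma down_pi (p : ℕ) : ∀ k (s : AA), down P p k (P.π (p + k) s) = P.π p s := by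
  intro k
  induction k with
  | zero => intro s; rfl
  | succ k ih =>
    intro s
    show down P p k (P.φ (p+k) (P.π (p+k+1) s)) = P.π p s
    rw [P.compat (p+k) s]
    exact ih s

lemma down_J (p : ℕ) : ∀ k {w : P.A (p + k)}, w ∈ Jn P I (p + k) → down P p k w ∈ Jn P I p := by
  intro k
  induction k with
  | zero => intro w hw; exact hw
  | succ k ih =>
    intro w hw
    exact ih (phi_maps_Jn P I (p+k) w hw)

lemma down_congr (p : ℕ) {k k' : ℕ} (hk : k = k') {N : ℕ} (h : N = p + k) (h' : N = p + k')
    (D : P.A N) : down P p k (AEq P h D) = down P p k' (AEq P h' D) := by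
  subst hk; rfl

lemma phi_down (p : ℕ) : ∀ k (w : P.A ((p+1) + k)) (h : (p+1) + k = p + (k+1)),
    P.φ p (down P (p+1) k w) = down P p (k+1) (AEq P h w) := by
  intro k
  induction k with
  | zero =>
    intro w h
    show P.φ p w = P.φ p (AEq P h w)
    rw [AEq_self]
  | succ k ih =>
    intro w h
    have h' : (p+1) + k = p + (k+1) := by omega
    have e1 : P.φ p (down P (p+1) (k+1) w) = P.φ p (down P (p+1) k (P.φ ((p+1)+k) w)) := rfl
    rw [e1, ih (P.φ ((p+1)+k) w) h']
    show down P p (k+1) (AEq P h' (P.φ ((p+1)+k) w)) = down P p (k+1) (P.φ (p+(k+1)) (AEq P h w))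
    exact congrArg _ (AEq_phi P h' h w)

lemma step_lemma (x : ∀ n, (Jn P I n).ringCon.Quotient)
    (hx : ∀ n, phibar P I n (x (n+1)) = x n) (n : ℕ) (v : P.A n)
    (hv : (Jn P I n).ringCon.mk' v = x n) :
    ∃ w : P.A (n+1), (Jn P I (n+1)).ringCon.mk' w = x (n+1) ∧
      ∀ p k (h : n = p + k),
        ‖down P p k (AEq P h (P.φ n w - v))‖ < (1/2 : ℝ)^n := by
  obtain ⟨w0, hw0⟩ := qmk_surjective _ (x (n+1))
  have hd0 : P.φ n w0 - v ∈ Jn P I n := by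
    rw [← qmk_eq_zero_iff, map_sub, hv]
    have h1 : (Jn P I n).ringCon.mk' (P.φ n w0) = phibar P I n (x (n+1)) := by
      rw [← hw0]; rfl
    rw [h1, hx n, sub_self]
  set d0 : P.A n := P.φ n w0 - v with hd0def
  set U : Set (P.A n) := ⋂ (pk : Fin (n+1)),
    (fun d => down P pk.1 (n - pk.1)
      (AEq P (Nat.add_sub_cancel' (Nat.lt_succ_iff.1 pk.2)).symm d)) ⁻¹'
      (Metric.ball 0 ((1/2:ℝ)^n)) with hU
  have hUopen : IsOpen U := isOpen_iInter_of_finite fun pk =>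
    Metric.isOpen_ball.preimage ((down_cont P _ _).comp (AEq_cont P _))
  have hpow : (0:ℝ) < (1/2:ℝ)^n := by positivity
  have hU0 : (0 : P.A n) ∈ U := by
    rw [hU]
    refine Set.mem_iInter.2 fun pk => ?_
    simp only [Set.mem_preimage, map_zero]
    exact Metric.mem_ball_self hpow
  have hd0mem : -d0 ∈ closure (P.φ n '' (Jn P I (n+1) : Set (P.A (n+1)))) := by
    have h2 : piI P I n ⊆ P.φ n '' (Jn P I (n+1) : Set (P.A (n+1))) := by
      rintro _ ⟨a, ha, rfl⟩
      exact ⟨P.π (n+1) a, pi_maps_I P I (n+1) a ha, P.compat n a⟩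
    have h1 : (Jn P I n : Set (P.A n)) ⊆ closure (P.φ n '' (Jn P I (n+1) : Set (P.A (n+1)))) := by
      intro z hz
      exact closure_mono h2 ((mem_Jn P I).1 hz)
    exact h1 ((Jn P I n).neg_mem hd0)
  have hexy : ∃ y ∈ P.φ n '' (Jn P I (n+1) : Set (P.A (n+1))), d0 + y ∈ U := by
    have hO : IsOpen ((fun y => d0 + y) ⁻¹' U) :=
      hUopen.preimage (continuous_const.add continuous_id)
    have hmem : -d0 ∈ (fun y => d0 + y) ⁻¹' U := by
      simp only [Set.mem_preimage, add_neg_cancel]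
      exact hU0
    obtain ⟨y, hy1, hy2⟩ := mem_closure_iff.1 hd0mem _ hO hmem
    exact ⟨y, hy2, hy1⟩
  obtain ⟨_, ⟨e, he, rfl⟩, hin⟩ := hexy
  refine ⟨w0 + e, ?_, ?_⟩
  · rw [map_add, hw0, (qmk_eq_zero_iff _ e).2 he, add_zero]
  · intro p k h
    have hD : P.φ n (w0 + e) - v = d0 + P.φ n e := by
      rw [map_add, hd0def]; abel
    rw [hD]
    have hp : p < n + 1 := by omega
    have hmem := Set.mem_iInter.1 hin ⟨p, hp⟩
    simp only [Set.mem_preimage, Metric.mem_ball, dist_zero_right] at hmem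
    have hk : n - p = k := by omega
    rwa [down_congr P p hk (Nat.add_sub_cancel' (Nat.lt_succ_iff.1 hp)).symm h] at hmem

lemma mem_I_of_levelwise
    (hI : @IsClosed AA
      (TopologicalSpace.induced (fun (a : AA) (n : ℕ) => P.π n a) inferInstance)
      (I : Set AA))
    (a : AA) (h : ∀ n, P.π n a ∈ Jn P I n) : a ∈ I := by
  set f : AA → ∀ n, P.A n := fun a n => P.π n a with hf
  have key : f a ∈ closure (f '' (I : Set AA)) := by
    rw [mem_closure_iff]
    intro O hO hgO
    obtain ⟨F, t, htF, hsub⟩ := isOpen_pi_iff.1 hO (f a) hgO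
    set N : ℕ := F.sup id with hN
    have hn : ∀ n ∈ F, n ≤ N := fun n hn => Finset.le_sup (f := id) hn
    set V : Set (P.A N) := ⋂ (np : {n : ℕ // n ∈ F}), (fun w => down P np.1 (N - np.1)
        (AEq P (Nat.add_sub_cancel' (hn np.1 np.2)).symm w)) ⁻¹' (t np.1) with hV
    have hVopen : IsOpen V := by
      rw [hV]
      refine isOpen_iInter_of_finite fun np => ?_
      exact (htF np.1 np.2).1.preimage ((down_cont P _ _).comp (AEq_cont P _))
    have hgV : P.π N a ∈ V := by
      rw [hV]
      refine Set.mem_iInter.2 fun np => ?_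
      simp only [Set.mem_preimage]
      rw [AEq_pi, down_pi]
      exact (htF np.1 np.2).2
    have hJ : P.π N a ∈ closure (piI P I N) := (mem_Jn P I).1 (h N)
    obtain ⟨w, hwV, hwpi⟩ := mem_closure_iff.1 hJ V hVopen hgV
    obtain ⟨ι, hι, rfl⟩ := hwpi
    refine ⟨f ι, ?_, Set.mem_image_of_mem f hι⟩
    apply hsub
    rw [Set.mem_pi]
    intro n hnF
    have := Set.mem_iInter.1 hwV ⟨n, hnF⟩
    simp only [Set.mem_preimage] at this
    rw [AEq_pi, down_pi] at this
    exact this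
  have : a ∈ @closure AA
      (TopologicalSpace.induced (fun (a : AA) (n : ℕ) => P.π n a) inferInstance)
      (I : Set AA) := closure_induced.2 key
  have h2 := @IsClosed.closure_eq AA
      (TopologicalSpace.induced (fun (a : AA) (n : ℕ) => P.π n a) inferInstance) (I : Set AA) hI
  rwa [h2] at this

lemma blim
    (hI : @IsClosed AA
      (TopologicalSpace.induced (fun (a : AA) (n : ℕ) => P.π n a) inferInstance)
      (I : Set AA))
    (x : ∀ n, (Jn P I n).ringCon.Quotient)
    (hx : ∀ n, phibar P I n (x (n+1)) = x n) :
    ∃! s : I.ringCon.Quotient, ∀ n, pibar P I n s = x n := by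
  let z : ∀ n, {v : P.A n // (Jn P I n).ringCon.mk' v = x n} := fun n => Nat.rec
    ⟨(qmk_surjective (Jn P I 0) (x 0)).choose, (qmk_surjective (Jn P I 0) (x 0)).choose_spec⟩
    (fun n prev => ⟨(step_lemma P I x hx n prev.1 prev.2).choose,
      (step_lemma P I x hx n prev.1 prev.2).choose_spec.1⟩) n
  have hzs : ∀ n p k (h : n = p + k),
      ‖down P p k (AEq P h (P.φ n ((z (n+1)).1) - (z n).1))‖ < (1/2:ℝ)^n := by
    intro n
    exact (step_lemma P I x hx n (z n).1 (z n).2).choose_spec.2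
  set s : ∀ p, ℕ → P.A p := fun p k => down P p k ((z (p+k)).1) with hsdef
  have hcau : ∀ p, CauchySeq (s p) := by
    intro p
    apply cauchySeq_of_le_geometric (1/2 : ℝ) 1 (by norm_num)
    intro k
    have e1 : s p (k+1) = down P p k (P.φ (p+k) ((z (p+k+1)).1)) := rfl
    have hlt := hzs (p+k) p k rfl
    rw [AEq_self] at hlt
    rw [dist_eq_norm, e1, hsdef]
    have e2 : down P p k ((z (p+k)).1) - down P p k (P.φ (p+k) ((z (p+k+1)).1))
        = -(down P p k (P.φ (p+k) ((z (p+k+1)).1) - (z (p+k)).1)) := by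
      rw [map_sub]; abel
    rw [e2, norm_neg]
    have e3 : ((1:ℝ)/2)^(p+k) ≤ 1 * (1/2:ℝ)^k := by
      rw [one_mul, pow_add]
      have h1 : ((1:ℝ)/2)^p ≤ 1 := pow_le_one₀ (by norm_num) (by norm_num)
      have h2 : (0:ℝ) < (1/2:ℝ)^k := by positivity
      nlinarith
    exact le_trans (le_of_lt hlt) e3
  have hy' : ∀ p, ∃ L, Filter.Tendsto (s p) Filter.atTop (𝓝 L) := fun p =>
    cauchySeq_tendsto_of_complete (hcau p)
  choose y hy using hy'
  have hyc : ∀ p, P.φ p (y (p+1)) = y p := by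
    intro p
    have t1 : Filter.Tendsto (fun k => P.φ p (s (p+1) k)) Filter.atTop
        (𝓝 (P.φ p (y (p+1)))) := ((P.φcont p).tendsto _).comp (hy (p+1))
    have t2 : ∀ k, P.φ p (s (p+1) k) = s p (k+1) := by
      intro k
      have h : (p+1) + k = p + (k+1) := by omega
      show P.φ p (down P (p+1) k ((z ((p+1)+k)).1)) = down P p (k+1) ((z (p+(k+1))).1)
      rw [phi_down P p k _ h, AEq_fam P (fun n => (z n).1) h]
    simp only [t2] at t1
    have t3 : Filter.Tendsto (fun k => s p (k+1)) Filter.atTop (𝓝 (y p)) :=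
      (hy p).comp (Filter.tendsto_add_atTop_nat 1)
    exact tendsto_nhds_unique t1 t3
  have hmkdown : ∀ p k (w : P.A (p+k)), (Jn P I (p+k)).ringCon.mk' w = x (p+k) →
      (Jn P I p).ringCon.mk' (down P p k w) = x p := by
    intro p k
    induction k with
    | zero => intro w hw; exact hw
    | succ k ih =>
      intro w hw
      show (Jn P I p).ringCon.mk' (down P p k (P.φ (p+k) w)) = x p
      apply ih
      have e : (Jn P I (p+k)).ringCon.mk' (P.φ (p+k) w)
          = phibar P I (p+k) ((Jn P I (p+k+1)).ringCon.mk' w) := rfl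
      rw [e]
      exact (congrArg (phibar P I (p+k)) hw).trans (hx (p+k))
  have hmky : ∀ p, (Jn P I p).ringCon.mk' (y p) = x p := by
    intro p
    letI := bR P I p
    have hc : Continuous ((Jn P I p).ringCon.mk') := qmk_continuous _ (Jn_closed P I p)
    have t1 : Filter.Tendsto (fun k => (Jn P I p).ringCon.mk' (s p k)) Filter.atTop
        (𝓝 ((Jn P I p).ringCon.mk' (y p))) := (hc.tendsto _).comp (hy p)
    have t2 : ∀ k, (Jn P I p).ringCon.mk' (s p k) = x p := fun k => hmkdown p k _ ((z (p+k)).2)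
    simp only [t2] at t1
    exact tendsto_nhds_unique t1 tendsto_const_nhds
  obtain ⟨sA, hsA, -⟩ := P.lim y hyc
  refine ⟨I.ringCon.mk' sA, ?_, ?_⟩
  · intro n
    have e : pibar P I n (I.ringCon.mk' sA) = (Jn P I n).ringCon.mk' (P.π n sA) := rfl
    rw [e, hsA n, hmky n]
  · intro t ht
    obtain ⟨u, hu⟩ := qmk_surjective I t
    have hlev : ∀ n, P.π n (u - sA) ∈ Jn P I n := by
      intro n
      rw [← qmk_eq_zero_iff, map_sub, map_sub]
      have e1 : (Jn P I n).ringCon.mk' (P.π n u) = pibar P I n t := by rw [← hu]; rfl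
      have e2 : (Jn P I n).ringCon.mk' (P.π n sA) = pibar P I n (I.ringCon.mk' sA) := rfl
      rw [e1, ht n, e2]
      have e3 : pibar P I n (I.ringCon.mk' sA) = (Jn P I n).ringCon.mk' (P.π n sA) := rfl
      rw [e3, hsA n, hmky n, sub_self]
    have hmem := mem_I_of_levelwise P I hI (u - sA) hlev
    rw [← hu]
    exact Quotient.sound' ((I.rel_iff u sA).2 hmem)

end FSMain

theorem statement10
    (K : Type) [NontriviallyNormedField K] [CompleteSpace K] [IsUltrametricDist K]
    (AA : Type) [Ring AA] (P : FSPresentation K AA)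
    (I : TwoSidedIdeal AA)
    (hI : @IsClosed AA
      (TopologicalSpace.induced (fun (a : AA) (n : ℕ) => P.π n a) inferInstance)
      (I : Set AA)) :
    Nonempty (FSPresentation K I.ringCon.Quotient) := by
  refine ⟨{
    A := fun n => (FSMain.Jn P I n).ringCon.Quotient
    ring := fun n => FSMain.bR P I n
    alg := fun n => qNormedAlgebra (FSMain.Jn P I n) (FSMain.Jn_closed P I n)
    complete := fun n => qComplete (FSMain.Jn P I n) (FSMain.Jn_closed P I n)
    noeth := fun n => by
      haveI := P.noeth n
      exact qNoetherian (FSMain.Jn P I n)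
    φ := FSMain.phibar P I
    φcont := fun n => qInduced_continuous (FSMain.Jn P I (n+1)) (FSMain.Jn_closed P I (n+1))
      (FSMain.Jn P I n) (FSMain.Jn_closed P I n) (P.φ n) (FSMain.phi_maps_Jn P I n) (P.φcont n)
    flat := FSMain.bflat P I
    π := FSMain.pibar P I
    compat := FSMain.bcompat P I
    dense := FSMain.bdense P I
    lim := FSMain.blim P I hI }⟩
end

section
/- Let A be a Fréchet–Stein algebra with defining Banach algebras A_n and let M be a coadmissible A-module corresponding to the coherent sheaf (M_n). If M_n is a simple A_n-module for infinitely many n, then M is a simple A-module. -/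
set_option maxHeartbeats 1600000

section Towers

variable {B : ℕ → Type*} [∀ n, AddCommGroup (B n)]

/-- Composite of the transition maps of a tower of additive groups. -/
def addTower (ψ : ∀ n, B (n+1) →+ B n) : ∀ {j k : ℕ}, j ≤ k → (B k →+ B j) :=
  fun {j _} h => Nat.leRecOn h (fun {i} g => g.comp (ψ i)) (AddMonoidHom.id (B j))

theorem addTower_self (ψ : ∀ n, B (n+1) →+ B n) {j : ℕ} (h : j ≤ j) :
    addTower ψ h = AddMonoidHom.id (B j) :=
  Nat.leRecOn_self _

theorem addTower_succ (ψ : ∀ n, B (n+1) →+ B n) {j k : ℕ} (h : j ≤ k) {h2 : j ≤ k+1} :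
    addTower ψ h2 = (addTower ψ h).comp (ψ k) :=
  Nat.leRecOn_succ h _

theorem addTower_trans (ψ : ∀ n, B (n+1) →+ B n) {j k l : ℕ} (h1 : j ≤ k) (h2 : k ≤ l)
    {h3 : j ≤ l} : addTower ψ h3 = (addTower ψ h1).comp (addTower ψ h2) := by
  induction l, h2 using Nat.le_induction with
  | base =>
      rw [addTower_self ψ (le_refl k), AddMonoidHom.comp_id]
  | succ l hkl ih =>
      rw [addTower_succ ψ (h1.trans hkl), addTower_succ ψ hkl, ih, AddMonoidHom.comp_assoc]

theorem addTower_continuous [∀ n, TopologicalSpace (B n)] (ψ : ∀ n, B (n+1) →+ B n)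
    (hc : ∀ n, Continuous (ψ n)) {j k : ℕ} (h : j ≤ k) : Continuous (addTower ψ h) := by
  induction k, h using Nat.le_induction with
  | base => rw [addTower_self]; exact continuous_id
  | succ k hk ih =>
      rw [addTower_succ ψ hk, AddMonoidHom.coe_comp]
      exact ih.comp (hc k)

end Towers

section RingTowers

variable {A : ℕ → Type*} [∀ n, Ring (A n)]

/-- Composite of the transition maps of a tower of rings. -/
def ringTower (φ : ∀ n, A (n+1) →+* A n) : ∀ {j k : ℕ}, j ≤ k → (A k →+* A j) :=
  fun {j _} h => Nat.leRecOn h (fun {i} g => g.comp (φ i)) (RingHom.id (A j))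

theorem ringTower_self (φ : ∀ n, A (n+1) →+* A n) {j : ℕ} (h : j ≤ j) :
    ringTower φ h = RingHom.id (A j) :=
  Nat.leRecOn_self _

theorem ringTower_succ (φ : ∀ n, A (n+1) →+* A n) {j k : ℕ} (h : j ≤ k) {h2 : j ≤ k+1} :
    ringTower φ h2 = (ringTower φ h).comp (φ k) :=
  Nat.leRecOn_succ h _

theorem ringTower_trans (φ : ∀ n, A (n+1) →+* A n) {j k l : ℕ} (h1 : j ≤ k) (h2 : k ≤ l)
    {h3 : j ≤ l} : ringTower φ h3 = (ringTower φ h1).comp (ringTower φ h2) := by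
  induction l, h2 using Nat.le_induction with
  | base => rw [ringTower_self φ (le_refl k), RingHom.comp_id]
  | succ l hkl ih =>
      rw [ringTower_succ φ (h1.trans hkl), ringTower_succ φ hkl, ih, RingHom.comp_assoc]

theorem ringTower_continuous [∀ n, TopologicalSpace (A n)] (φ : ∀ n, A (n+1) →+* A n)
    (hc : ∀ n, Continuous (φ n)) {j k : ℕ} (h : j ≤ k) : Continuous (ringTower φ h) := by
  induction k, h using Nat.le_induction with
  | base => rw [ringTower_self]; exact continuous_id
  | succ k hk ih =>
      rw [ringTower_succ φ hk, RingHom.coe_comp]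
      exact ih.comp (hc k)

end RingTowers

/-- Span of an image of a span, along a semilinear additive map. -/
theorem span_image_span {R R' M M' : Type*} [Ring R] [Ring R'] [AddCommGroup M] [Module R M]
    [AddCommGroup M'] [Module R' M'] (g : M →+ M') (τ : R →+* R')
    (hg : ∀ (a : R) (x : M), g (a • x) = τ a • g x) (s : Set M) :
    Submodule.span R' (⇑g '' ↑(Submodule.span R s)) = Submodule.span R' (⇑g '' s) := by
  apply le_antisymm
  · rw [Submodule.span_le]
    rintro _ ⟨x, hx, rfl⟩
    refine Submodule.span_induction (p := fun z _ => g z ∈ Submodule.span R' (⇑g '' s))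
      ?_ ?_ ?_ ?_ hx
    · intro x hxs; exact Submodule.subset_span ⟨x, hxs, rfl⟩
    · simp
    · intro x y _ _ ihx ihy; rw [map_add]; exact Submodule.add_mem _ ihx ihy
    · intro a x _ ih; rw [hg]; exact Submodule.smul_mem _ _ ih
  · exact Submodule.span_mono (Set.image_mono Submodule.subset_span)

/-- Multi-relation version of the equational flatness criterion. -/
theorem multiflat {S R : Type*} [Ring S] [Ring R] (φ : S →+* R) (h : RightFlatRingHom φ) :
    ∀ (q : ℕ) {k : ℕ} (r : Fin q → Fin k → S) (m : Fin k → R),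
      (∀ i, (∑ p, m p * φ (r i p)) = 0) →
      ∃ (l : ℕ) (b : Fin k → Fin l → S) (z : Fin l → R),
        (∀ p, m p = ∑ w, z w * φ (b p w)) ∧ ∀ w i, (∑ p, b p w * r i p) = 0 := by
  intro q
  induction q with
  | zero =>
      intro k r m _
      refine ⟨k, fun p w => if p = w then 1 else 0, m, ?_, fun w i => i.elim0⟩
      intro p
      rw [Finset.sum_eq_single p]
      · simp
      · intro w _ hw; simp [Ne.symm hw]
      · intro hp; exact absurd (Finset.mem_univ p) hp
  | succ q ih =>
      intro k r m hrel
      obtain ⟨l₁, a, y, hya, hrel0⟩ := h k (r 0) m (hrel 0)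
      set r' : Fin q → Fin l₁ → S := fun i u => ∑ p, a p u * r i.succ p with hr'
      have hrel' : ∀ i, (∑ u, y u * φ (r' i u)) = 0 := by
        intro i
        have : ∀ u, y u * φ (r' i u) = ∑ p, y u * φ (a p u) * φ (r i.succ p) := by
          intro u; rw [hr', map_sum, Finset.mul_sum]
          refine Finset.sum_congr rfl fun p _ => ?_
          rw [map_mul, mul_assoc]
        calc (∑ u, y u * φ (r' i u)) = ∑ u, ∑ p, y u * φ (a p u) * φ (r i.succ p) :=
              Finset.sum_congr rfl fun u _ => this u
          _ = ∑ p, (∑ u, y u * φ (a p u)) * φ (r i.succ p) := by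
              rw [Finset.sum_comm]
              exact Finset.sum_congr rfl fun p _ => by rw [Finset.sum_mul]
          _ = ∑ p, m p * φ (r i.succ p) := by
              refine Finset.sum_congr rfl fun p _ => ?_; rw [← hya p]
          _ = 0 := hrel i.succ
      obtain ⟨l, b', z, hzb, hrelb⟩ := ih r' y hrel'
      refine ⟨l, fun p w => ∑ u, b' u w * a p u, z, ?_, ?_⟩
      · intro p
        calc m p = ∑ u, y u * φ (a p u) := hya p
          _ = ∑ u, (∑ w, z w * φ (b' u w)) * φ (a p u) :=
              Finset.sum_congr rfl fun u _ => by rw [← hzb u]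
          _ = ∑ u, ∑ w, z w * (φ (b' u w) * φ (a p u)) := by
              refine Finset.sum_congr rfl fun u _ => ?_
              rw [Finset.sum_mul]
              exact Finset.sum_congr rfl fun w _ => by rw [mul_assoc]
          _ = ∑ w, ∑ u, z w * (φ (b' u w) * φ (a p u)) := Finset.sum_comm
          _ = ∑ w, z w * φ (∑ u, b' u w * a p u) := by
              refine Finset.sum_congr rfl fun w _ => ?_
              rw [map_sum, Finset.mul_sum]
              exact Finset.sum_congr rfl fun u _ => by rw [map_mul]
      · intro w i
        refine Fin.cases ?_ ?_ i
        · calc (∑ p, (∑ u, b' u w * a p u) * r 0 p)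
              = ∑ p, ∑ u, b' u w * (a p u * r 0 p) := by
                refine Finset.sum_congr rfl fun p _ => ?_
                rw [Finset.sum_mul]
                exact Finset.sum_congr rfl fun u _ => by rw [mul_assoc]
            _ = ∑ u, b' u w * (∑ p, a p u * r 0 p) := by
                rw [Finset.sum_comm]
                exact Finset.sum_congr rfl fun u _ => by rw [Finset.mul_sum]
            _ = 0 := by
                refine Finset.sum_eq_zero fun u _ => ?_
                rw [hrel0 u, mul_zero]
        · intro i'
          calc (∑ p, (∑ u, b' u w * a p u) * r i'.succ p)
              = ∑ p, ∑ u, b' u w * (a p u * r i'.succ p) := by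
                refine Finset.sum_congr rfl fun p _ => ?_
                rw [Finset.sum_mul]
                exact Finset.sum_congr rfl fun u _ => by rw [mul_assoc]
            _ = ∑ u, b' u w * (∑ p, a p u * r i'.succ p) := by
                rw [Finset.sum_comm]
                exact Finset.sum_congr rfl fun u _ => by rw [Finset.mul_sum]
            _ = ∑ u, b' u w * r' i' u := by
                refine Finset.sum_congr rfl fun u _ => ?_; rw [hr']
            _ = 0 := hrelb w i'

theorem span_image_span_ring {R R' : Type*} [Ring R] [Ring R'] (τ : R →+* R') (s : Set R) :
    Submodule.span R' (⇑τ '' ↑(Submodule.span R s)) = Submodule.span R' (⇑τ '' s) := by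
  apply le_antisymm
  · rw [Submodule.span_le]
    rintro _ ⟨x, hx, rfl⟩
    refine Submodule.span_induction (p := fun z _ => τ z ∈ Submodule.span R' (⇑τ '' s))
      ?_ ?_ ?_ ?_ hx
    · intro x hxs; exact Submodule.subset_span ⟨x, hxs, rfl⟩
    · simp
    · intro x y _ _ ihx ihy; rw [map_add]; exact Submodule.add_mem _ ihx ihy
    · intro a x _ ih
      rw [smul_eq_mul, map_mul, ← smul_eq_mul]
      exact Submodule.smul_mem _ _ ih
  · exact Submodule.span_mono (Set.image_mono Submodule.subset_span)


/-- Base change of annihilators along a flat scalar extension. -/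
theorem ann_baseChange {S R : Type} [Ring S] [Ring R] (φ : S →+* R)
    (hflat : RightFlatRingHom φ)
    {N : Type} [AddCommGroup N] [Module S N] [Module.Finite S N] [IsNoetherianRing S]
    {N' : Type} [AddCommGroup N'] [Module R N'] (f : N →+ N')
    (hext : IsScalarExtension φ N N' f)
    (v : N) (a : R) (hav : a • f v = 0) :
    a ∈ Submodule.span R (⇑φ '' {s : S | s • v = 0}) := by
  classical
  obtain ⟨k, vv, hvv⟩ := Module.Finite.exists_fin (R := S) (M := N)
  have hcoord : ∀ x : N, ∃ c : Fin k → S, ∑ i, c i • vv i = x := by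
    intro x
    rw [← Submodule.mem_span_range_iff_exists_fun (R := S), hvv]
    trivial
  choose coord hcoordspec using hcoord
  -- the relations submodule
  let lmap : (Fin k → S) →ₗ[S] N :=
    { toFun := fun c => ∑ i, c i • vv i
      map_add' := by intro c d; simp [add_smul, Finset.sum_add_distrib]
      map_smul' := by intro s c; simp [Finset.smul_sum, mul_smul] }
  obtain ⟨t, ρ, hρ⟩ :=
    Submodule.fg_iff_exists_fin_generating_family.mp
      (IsNoetherian.noetherian (LinearMap.ker lmap))
  have hρmem : ∀ j, ∑ i, ρ j i • vv i = 0 := by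
    intro j
    have : ρ j ∈ LinearMap.ker lmap := by
      rw [← hρ]; exact Submodule.subset_span (Set.mem_range_self j)
    simpa [lmap] using this
  -- the base-changed relations
  set RRel : Submodule R (Fin k → R) :=
    Submodule.span R (Set.range fun j => (fun i => φ (ρ j i))) with hRRel
  have hker : ∀ c : Fin k → S, (∑ i, c i • vv i) = 0 → (fun i => φ (c i)) ∈ RRel := by
    intro c hc
    have hmem : c ∈ LinearMap.ker lmap := by
      simp only [LinearMap.mem_ker]; exact hc
    rw [← hρ] at hmem
    obtain ⟨d, hd⟩ := (Submodule.mem_span_range_iff_exists_fun S).mp hmem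
    have heq : (fun i => φ (c i)) = ∑ j, φ (d j) • (fun i => φ (ρ j i)) := by
      funext i
      rw [Finset.sum_apply]
      have : c i = ∑ j, d j * ρ j i := by
        rw [← hd, Finset.sum_apply]
        simp [Pi.smul_apply, smul_eq_mul]
      rw [this, map_sum]
      refine Finset.sum_congr rfl fun j _ => ?_
      simp [map_mul, smul_eq_mul]
    rw [heq]
    exact Submodule.sum_mem _ fun j _ =>
      Submodule.smul_mem _ _ (Submodule.subset_span (Set.mem_range_self j))
  have hmk_eq : ∀ c c' : Fin k → S, (∑ i, c i • vv i) = (∑ i, c' i • vv i) →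
      RRel.mkQ (fun i => φ (c i)) = RRel.mkQ (fun i => φ (c' i)) := by
    intro c c' hcc
    have h0 : (∑ i, (c - c') i • vv i) = 0 := by
      simp only [Pi.sub_apply, sub_smul, Finset.sum_sub_distrib, hcc, sub_self]
    have hmem := hker _ h0
    have heq : (fun i => φ ((c - c') i)) = (fun i => φ (c i)) - (fun i => φ (c' i)) := by
      funext i; simp [map_sub]
    rw [heq] at hmem
    have := (Submodule.Quotient.mk_eq_zero RRel).mpr hmem
    rw [← Submodule.mkQ_apply, map_sub, sub_eq_zero] at this
    exact this
  -- the comparison map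
  let F' : N →+ ((Fin k → R) ⧸ RRel) :=
    { toFun := fun x => RRel.mkQ (fun i => φ (coord x i))
      map_zero' := by
        show RRel.mkQ (fun i => φ (coord 0 i)) = 0
        have : RRel.mkQ (fun i => φ (coord 0 i)) = RRel.mkQ (fun i => φ ((0 : Fin k → S) i)) := by
          apply hmk_eq
          rw [hcoordspec 0]
          simp
        rw [this]
        have h0 : (fun i => φ ((0 : Fin k → S) i)) = (0 : Fin k → R) := by funext i; simp
        rw [h0, map_zero]
      map_add' := by
        intro x y
        show RRel.mkQ (fun i => φ (coord (x+y) i))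
          = RRel.mkQ (fun i => φ (coord x i)) + RRel.mkQ (fun i => φ (coord y i))
        have h1 : RRel.mkQ (fun i => φ (coord (x + y) i))
            = RRel.mkQ (fun i => φ ((coord x + coord y) i)) := by
          apply hmk_eq
          rw [hcoordspec (x + y)]
          simp only [Pi.add_apply, add_smul, Finset.sum_add_distrib, hcoordspec x, hcoordspec y]
        rw [h1]
        have h2 : (fun i => φ ((coord x + coord y) i))
            = (fun i => φ (coord x i)) + (fun i => φ (coord y i)) := by
          funext i; simp [map_add]
        rw [h2, map_add] }
  have hF'semi : ∀ (s : S) (x : N), F' (s • x) = φ s • F' x := by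
    intro s x
    show RRel.mkQ (fun i => φ (coord (s • x) i)) = φ s • RRel.mkQ (fun i => φ (coord x i))
    have h1 : RRel.mkQ (fun i => φ (coord (s • x) i))
        = RRel.mkQ (fun i => φ ((s • coord x) i)) := by
      apply hmk_eq
      rw [hcoordspec (s • x)]
      simp only [Pi.smul_apply, smul_eq_mul, mul_smul, ← Finset.smul_sum, hcoordspec x]
    rw [h1]
    have h2 : (fun i => φ ((s • coord x) i)) = φ s • (fun i => φ (coord x i)) := by
      funext i; simp [map_mul, smul_eq_mul]
    rw [h2, map_smul]
  obtain ⟨h₁, hh₁, _⟩ := hext.2 ((Fin k → R) ⧸ RRel) F' hF'semi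
  -- push the hypothesis through h₁
  have hQ : (RRel.mkQ (a • fun i => φ (coord v i))) = 0 := by
    have : h₁ (a • f v) = 0 := by rw [hav, map_zero]
    rw [map_smul, hh₁ v] at this
    show RRel.mkQ (a • fun i => φ (coord v i)) = 0
    rw [map_smul]
    exact this
  have hmemR : (fun i => a * φ (coord v i)) ∈ RRel := by
    have h6 := (Submodule.Quotient.mk_eq_zero RRel).mp (by rw [← Submodule.mkQ_apply]; exact hQ)
    have h7 : (a • fun i => φ (coord v i)) = (fun i => a * φ (coord v i)) := by
      funext i; simp [smul_eq_mul]
    rwa [h7] at h6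
  obtain ⟨y, hy⟩ := (Submodule.mem_span_range_iff_exists_fun R).mp hmemR
  have hyi : ∀ i, ∑ j, y j * φ (ρ j i) = a * φ (coord v i) := by
    intro i
    have := congrFun hy i
    rw [Finset.sum_apply] at this
    simpa [smul_eq_mul] using this
  -- apply the flatness criterion
  set mm : Fin (t+1) → R := Fin.cons a y with hmm
  set rr : Fin k → Fin (t+1) → S := fun i => Fin.cons (coord v i) (fun j => -ρ j i) with hrr
  have hrel : ∀ i, (∑ p, mm p * φ (rr i p)) = 0 := by
    intro i
    rw [Fin.sum_univ_succ]
    simp only [hmm, hrr, Fin.cons_zero, Fin.cons_succ, map_neg, mul_neg]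
    rw [Finset.sum_neg_distrib, ← sub_eq_add_neg, sub_eq_zero]
    exact (hyi i).symm
  obtain ⟨l, b, z, hzb, hbrel⟩ := multiflat φ hflat k rr mm hrel
  have hann : ∀ w, b 0 w • v = 0 := by
    intro w
    have hrelw : ∀ i, b 0 w * coord v i = ∑ j : Fin t, b j.succ w * ρ j i := by
      intro i
      have h5 := hbrel w i
      rw [Fin.sum_univ_succ] at h5
      simp only [hrr, Fin.cons_zero, Fin.cons_succ, mul_neg] at h5
      rw [Finset.sum_neg_distrib, ← sub_eq_add_neg, sub_eq_zero] at h5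
      exact h5
    calc b 0 w • v = b 0 w • ∑ i, coord v i • vv i := by rw [hcoordspec v]
      _ = ∑ i, (b 0 w * coord v i) • vv i := by
          rw [Finset.smul_sum]; exact Finset.sum_congr rfl fun i _ => (mul_smul _ _ _).symm
      _ = ∑ i, (∑ j : Fin t, b j.succ w * ρ j i) • vv i :=
          Finset.sum_congr rfl fun i _ => by rw [hrelw i]
      _ = ∑ i, ∑ j : Fin t, (b j.succ w * ρ j i) • vv i :=
          Finset.sum_congr rfl fun i _ => by rw [Finset.sum_smul]
      _ = ∑ j : Fin t, ∑ i, (b j.succ w * ρ j i) • vv i := Finset.sum_comm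
      _ = ∑ j : Fin t, b j.succ w • ∑ i, ρ j i • vv i := by
          refine Finset.sum_congr rfl fun j _ => ?_
          rw [Finset.smul_sum]
          exact Finset.sum_congr rfl fun i _ => mul_smul _ _ _
      _ = 0 := by
          refine Finset.sum_eq_zero fun j _ => ?_
          rw [hρmem j, smul_zero]
  have ha : a = ∑ w, z w * φ (b 0 w) := by
    have := hzb 0
    rwa [hmm, Fin.cons_zero] at this
  rw [ha]
  exact Submodule.sum_mem _ fun w _ =>
    Submodule.smul_mem _ _ (Submodule.subset_span ⟨b 0 w, hann w, rfl⟩)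

section Sheaf
variable {A : ℕ → Type} [∀ n, Ring (A n)] {φ : ∀ n, A (n+1) →+* A n} (C : CoherentSheaf A φ)

theorem sheaf_semilinear {j k : ℕ} (h : j ≤ k) (s : A k) (x : C.N k) :
    addTower C.f h (s • x) = ringTower φ h s • addTower C.f h x := by
  induction k, h using Nat.le_induction with
  | base =>
      rw [addTower_self, ringTower_self]; rfl
  | succ k hk ih =>
      rw [addTower_succ C.f hk, ringTower_succ φ hk]
      show addTower C.f hk (C.f k (s • x)) = (ringTower φ hk) (φ k s) • addTower C.f hk (C.f k x)
      rw [(C.ext k).1 s x, ih]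

theorem sheaf_pi_compat {AA : Type} [Ring AA] (π : ∀ n, AA →+* A n)
    (hcompat : ∀ n a, φ n (π (n+1) a) = π n a) {j k : ℕ} (h : j ≤ k) (s : AA) :
    ringTower φ h (π k s) = π j s := by
  induction k, h using Nat.le_induction with
  | base => rw [ringTower_self]; rfl
  | succ k hk ih =>
      rw [ringTower_succ φ hk]
      show (ringTower φ hk) (φ k (π (k+1) s)) = π j s
      rw [hcompat k s, ih]

theorem sheaf_span_range_top (n : ℕ) :
    Submodule.span (A n) (Set.range ⇑(C.f n)) = ⊤ := by
  set Sp := Submodule.span (A n) (Set.range ⇑(C.f n)) with hSp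
  obtain ⟨h, hh, huniq⟩ := (C.ext n).2 (C.N n ⧸ Sp) (0 : C.N (n+1) →+ C.N n ⧸ Sp)
    (by intro s x; simp)
  have e1 : Sp.mkQ = h := by
    apply huniq
    intro x
    rw [Submodule.mkQ_apply]
    exact (Submodule.Quotient.mk_eq_zero _).mpr (Submodule.subset_span (Set.mem_range_self x))
  have e2 : (0 : C.N n →ₗ[A n] C.N n ⧸ Sp) = h := by
    apply huniq; intro x; rfl
  rw [Submodule.eq_top_iff']
  intro z
  have h3 : Sp.mkQ z = 0 := by rw [e1, ← e2]; rfl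
  rwa [Submodule.mkQ_apply, Submodule.Quotient.mk_eq_zero] at h3

theorem sheaf_span_range_tower_top {j k : ℕ} (h : j ≤ k) :
    Submodule.span (A j) (Set.range ⇑(addTower C.f h)) = ⊤ := by
  induction k, h using Nat.le_induction with
  | base =>
      rw [addTower_self]
      rw [show ⇑(AddMonoidHom.id (C.N j)) = id from rfl, Set.range_id]
      exact Submodule.span_univ
  | succ k hk ih =>
      rw [addTower_succ C.f hk, AddMonoidHom.coe_comp, Set.range_comp]
      calc Submodule.span (A j) (⇑(addTower C.f hk) '' Set.range ⇑(C.f k))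
          = Submodule.span (A j) (⇑(addTower C.f hk) '' ↑(Submodule.span (A k) (Set.range ⇑(C.f k)))) :=
            (span_image_span _ (ringTower φ hk) (fun a x => sheaf_semilinear C hk a x) _).symm
        _ = Submodule.span (A j) (⇑(addTower C.f hk) '' Set.univ) := by
            rw [sheaf_span_range_top C k, Submodule.top_coe]
        _ = ⊤ := by rw [Set.image_univ]; exact ih

theorem ann_chain (hnoeth : ∀ n, IsNoetherianRing (A n)) (hflat : ∀ n, RightFlatRingHom (φ n)) :
    ∀ {n n' : ℕ} (h : n ≤ n') (v : C.N n') (a : A n),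
      a • addTower C.f h v = 0 →
      a ∈ Submodule.span (A n) (⇑(ringTower φ h) '' {s : A n' | s • v = 0}) := by
  intro n n' h
  induction n', h using Nat.le_induction with
  | base =>
      intro v a ha
      have hav : a • v = 0 := by rwa [addTower_self] at ha
      refine Submodule.subset_span ⟨a, hav, ?_⟩
      rw [ringTower_self]; rfl
  | succ n' hn ih =>
      intro v a ha
      rw [addTower_succ C.f hn] at ha
      have h1 := ih (C.f n' v) a ha
      haveI := C.fin (n'+1)
      haveI := hnoeth (n'+1)
      have h2 : {s : A n' | s • C.f n' v = 0}
          ⊆ ↑(Submodule.span (A n') (⇑(φ n') '' {s : A (n'+1) | s • v = 0})) := by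
        intro b hb
        exact ann_baseChange (φ n') (hflat n') (C.f n') (C.ext n') v b hb
      have h3 : a ∈ Submodule.span (A n)
          (⇑(ringTower φ hn) '' ↑(Submodule.span (A n') (⇑(φ n') '' {s : A (n'+1) | s • v = 0}))) :=
        Submodule.span_mono (Set.image_mono h2) h1
      rw [span_image_span_ring (ringTower φ hn) _] at h3
      rw [← Set.image_comp] at h3
      have hcomp : ⇑(ringTower φ (hn.trans (Nat.le_succ n'))) = ⇑(ringTower φ hn) ∘ ⇑(φ n') := by
        rw [ringTower_succ φ hn]; rfl
      rw [hcomp]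
      exact h3

end Sheaf

/-- The core inverse-limit construction for towers of complete normed groups. -/
theorem tower_core (B : ℕ → Type) [∀ k, NormedAddCommGroup (B k)] [∀ k, CompleteSpace (B k)]
    (ψ : ∀ k, B (k+1) →+ B k) (hψc : ∀ k, Continuous (ψ k))
    (W : ∀ k, Set (B k)) (J : ∀ k, AddSubgroup (B k))
    (hJψ : ∀ k, ∀ u ∈ J (k+1), ψ k u ∈ J k)
    (hstep : ∀ k, ∀ z ∈ W k, ∀ ε : ℝ, 0 < ε → ∃ z' ∈ W (k+1), ∃ u ∈ J k, ‖ψ k z' - z - u‖ < ε)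
    (E : ℝ) (hE : 0 < E) (a₀ : B 0) (ha₀ : a₀ ∈ W 0) :
    ∃ (c : ∀ k, B k) (u : ∀ k, B k) (a' : ∀ k, B k),
      a' 0 = a₀ ∧ (∀ k, a' k ∈ W k) ∧ (∀ k, u k ∈ J k) ∧
      (∀ k, ψ k (c (k+1)) - c k = u k) ∧
      (∀ j, dist (c j) (a' j) ≤ 2 * E) ∧
      (∀ (j : ℕ) (S : Set (B j)), IsClosed S →
        (∀ (k : ℕ), ∀ z ∈ W (j+k), ∀ ρ ∈ J j, addTower ψ (Nat.le_add_right j k) z - ρ ∈ S) →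
        c j ∈ S) := by
  classical
  -- pushforward of J along towers
  have hJtow : ∀ {j k : ℕ} (h : j ≤ k), ∀ u ∈ J k, addTower ψ h u ∈ J j := by
    intro j k h
    induction k, h using Nat.le_induction with
    | base => intro u hu; rw [addTower_self]; exact hu
    | succ k hk ih =>
        intro u hu
        rw [addTower_succ ψ hk]
        exact ih _ (hJψ k u hu)
  -- adaptive deltas
  have hdelta : ∀ k : ℕ, ∃ δ : ℝ, 0 < δ ∧
      ∀ (j : ℕ) (hj : j ≤ k) (z : B k), ‖z‖ < δ → ‖addTower ψ hj z‖ < E * (1/2)^k := by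
    intro k
    have key : ∀ c : ℕ, ∃ δ : ℝ, 0 < δ ∧
        ∀ (j : ℕ), j < c → ∀ (hj : j ≤ k) (z : B k), ‖z‖ < δ → ‖addTower ψ hj z‖ < E * (1/2)^k := by
      intro c
      induction c with
      | zero => exact ⟨1, one_pos, fun j hj => absurd hj (Nat.not_lt_zero j)⟩
      | succ c ih =>
          obtain ⟨δ, hδ, hall⟩ := ih
          by_cases hck : c ≤ k
          · have hcont : Continuous (addTower ψ hck) := addTower_continuous ψ hψc hck
            have htd : Filter.Tendsto (addTower ψ hck) (nhds 0) (nhds 0) := by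
              have := hcont.tendsto 0
              rwa [map_zero] at this
            obtain ⟨δ', hδ', hδ'spec⟩ := Metric.tendsto_nhds_nhds.mp htd (E * (1/2)^k)
              (by positivity)
            refine ⟨min δ δ', lt_min hδ hδ', ?_⟩
            intro j hjc hj z hz
            rcases Nat.lt_succ_iff_lt_or_eq.mp hjc with hlt | rfl
            · exact hall j hlt hj z (lt_of_lt_of_le hz (min_le_left _ _))
            · have h1 : dist z 0 < δ' := by
                rw [dist_zero_right]; exact lt_of_lt_of_le hz (min_le_right _ _)
              have := hδ'spec h1
              rwa [dist_zero_right] at this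
          · refine ⟨δ, hδ, ?_⟩
            intro j hjc hj z hz
            rcases Nat.lt_succ_iff_lt_or_eq.mp hjc with hlt | rfl
            · exact hall j hlt hj z hz
            · exact absurd hj hck
    obtain ⟨δ, hδ, hall⟩ := key (k+1)
    exact ⟨δ, hδ, fun j hj z hz => hall j (Nat.lt_succ_of_le hj) hj z hz⟩
  choose δf hδf using hdelta
  -- the recursive construction
  let step : ∀ k, {z : B k // z ∈ W k} → {z : B (k+1) // z ∈ W (k+1)} := fun k p =>
    ⟨(hstep k p.1 p.2 (δf k) (hδf k).1).choose, (hstep k p.1 p.2 (δf k) (hδf k).1).choose_spec.1⟩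
  let aa : ∀ k, {z : B k // z ∈ W k} := fun k => Nat.rec ⟨a₀, ha₀⟩ step k
  have haasucc : ∀ k, aa (k+1) = step k (aa k) := fun k => rfl
  let u : ∀ k, B k := fun k =>
    ((hstep k (aa k).1 (aa k).2 (δf k) (hδf k).1).choose_spec.2).choose
  have hu : ∀ k, u k ∈ J k ∧ ‖ψ k (aa (k+1)).1 - (aa k).1 - u k‖ < δf k := fun k =>
    ((hstep k (aa k).1 (aa k).2 (δf k) (hδf k).1).choose_spec.2).choose_spec
  have hsmall : ∀ (j k : ℕ) (hj : j ≤ k),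
      ‖addTower ψ hj (ψ k (aa (k+1)).1 - (aa k).1 - u k)‖ < E * (1/2)^k :=
    fun j k hj => (hδf k).2 j hj _ (hu k).2
  -- total tower maps and partial correction sums
  let T' : ∀ (j i : ℕ), B i →+ B j := fun j i => if h : j ≤ i then addTower ψ h else 0
  have hT'eq : ∀ {j i : ℕ} (h : j ≤ i), T' j i = addTower ψ h := by
    intro j i h; simp only [T', dif_pos h]
  let rr : ∀ (j : ℕ), ℕ → B j := fun j n => ∑ i ∈ Finset.Ico j n, T' j i (u i)
  have hrr_self : ∀ j, rr j j = 0 := by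
    intro j; simp [rr]
  have hrr_succ : ∀ (j n : ℕ), j ≤ n → rr j (n+1) = rr j n + T' j n (u n) := by
    intro j n h; exact Finset.sum_Ico_succ_top h _
  have hrrJ : ∀ (j n : ℕ), rr j n ∈ J j := by
    intro j n
    refine AddSubgroup.sum_mem _ fun i hi => ?_
    have hji : j ≤ i := (Finset.mem_Ico.mp hi).1
    rw [hT'eq hji]
    exact hJtow hji _ ((hu i).1)
  -- the approximating sequences
  let seq : ∀ (j : ℕ), ℕ → B j := fun j k => T' j (j+k) ((aa (j+k)).1) - rr j (j+k)
  have hseq0 : ∀ j, seq j 0 = (aa j).1 := by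
    intro j
    show T' j j ((aa j).1) - rr j j = (aa j).1
    rw [hT'eq (le_refl j), addTower_self, hrr_self]
    simp
  have hdiff : ∀ (j k : ℕ),
      seq j (k+1) - seq j k
        = addTower ψ (Nat.le_add_right j k) (ψ (j+k) ((aa (j+k+1)).1) - (aa (j+k)).1 - u (j+k)) := by
    intro j k
    have hj : j ≤ j + k := Nat.le_add_right j k
    have e1 : T' j (j+k+1) ((aa (j+k+1)).1) = addTower ψ hj (ψ (j+k) ((aa (j+k+1)).1)) := by
      rw [hT'eq (hj.trans (Nat.le_succ _)), addTower_succ ψ hj]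
      rfl
    have e2 : rr j (j+k+1) = rr j (j+k) + addTower ψ hj (u (j+k)) := by
      rw [hrr_succ j (j+k) hj, hT'eq hj]
    show T' j (j+k+1) ((aa (j+k+1)).1) - rr j (j+k+1) - (T' j (j+k) ((aa (j+k)).1) - rr j (j+k))
      = addTower ψ hj (ψ (j+k) ((aa (j+k+1)).1) - (aa (j+k)).1 - u (j+k))
    rw [e1, e2, hT'eq hj, map_sub, map_sub]
    abel
  have hdistk : ∀ (j k : ℕ), dist (seq j k) (seq j (k+1)) ≤ E * (1/2)^k := by
    intro j k
    rw [dist_comm, dist_eq_norm, hdiff j k]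
    have h1 := hsmall j (j+k) (Nat.le_add_right j k)
    have h2 : E * (1/2:ℝ)^(j+k) ≤ E * (1/2)^k := by
      apply mul_le_mul_of_nonneg_left _ hE.le
      exact pow_le_pow_of_le_one (by norm_num) (by norm_num) (Nat.le_add_left k j)
    exact h1.le.trans h2
  have hcauchy : ∀ j, CauchySeq (seq j) := by
    intro j
    exact cauchySeq_of_le_geometric (1/2) E (by norm_num) fun k => hdistk j k
  have hlimex : ∀ j, ∃ c : B j, Filter.Tendsto (seq j) Filter.atTop (nhds c) :=
    fun j => cauchySeq_tendsto_of_complete (hcauchy j)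
  choose c hc using hlimex
  -- compatibility
  have hpsiT : ∀ (j n : ℕ) (h : j+1 ≤ n) (z : B n),
      ψ j (addTower ψ h z) = addTower ψ ((Nat.le_succ j).trans h) z := by
    intro j n h z
    have h0 : addTower ψ (Nat.le_succ j) = ψ j := by
      rw [addTower_succ ψ (le_refl j), addTower_self]
      rfl
    rw [addTower_trans ψ (Nat.le_succ j) h, AddMonoidHom.comp_apply, h0]
  have hcompat : ∀ k, ψ k (c (k+1)) - c k = u k := by
    intro k
    have h1 : Filter.Tendsto (fun n => ψ k (seq (k+1) n)) Filter.atTop (nhds (ψ k (c (k+1)))) :=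
      ((hψc k).tendsto _).comp (hc (k+1))
    have h2 : ∀ n, ψ k (seq (k+1) n) = seq k (n+1) + u k := by
      intro n
      have hn : (k+1) + n = k + (n+1) := by omega
      have hk1 : k+1 ≤ (k+1)+n := Nat.le_add_right _ _
      show ψ k (T' (k+1) ((k+1)+n) ((aa ((k+1)+n)).1) - rr (k+1) ((k+1)+n)) = _
      rw [map_sub, hT'eq hk1, hpsiT k _ hk1]
      have h3 : ψ k (rr (k+1) ((k+1)+n)) = rr k ((k+1)+n) - u k := by
        show ψ k (∑ i ∈ Finset.Ico (k+1) ((k+1)+n), T' (k+1) i (u i)) = _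
        rw [map_sum]
        have h4 : ∀ i ∈ Finset.Ico (k+1) ((k+1)+n), ψ k (T' (k+1) i (u i)) = T' k i (u i) := by
          intro i hi
          have hki : k+1 ≤ i := (Finset.mem_Ico.mp hi).1
          rw [hT'eq hki, hpsiT k i hki, hT'eq ((Nat.le_succ k).trans hki)]
        rw [Finset.sum_congr rfl h4]
        have h5 : rr k ((k+1)+n) = T' k k (u k) + ∑ i ∈ Finset.Ico (k+1) ((k+1)+n), T' k i (u i) := by
          show (∑ i ∈ Finset.Ico k ((k+1)+n), T' k i (u i)) = _
          rw [Finset.sum_eq_sum_Ico_succ_bot (by omega)]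
        rw [h5, hT'eq (le_refl k), addTower_self]
        show _ = AddMonoidHom.id (B k) (u k) + _ - u k
        simp
      rw [h3]
      show addTower ψ ((Nat.le_succ k).trans hk1) ((aa ((k+1)+n)).1) - (rr k ((k+1)+n) - u k)
        = T' k (k+(n+1)) ((aa (k+(n+1))).1) - rr k (k+(n+1)) + u k
      rw [← hT'eq ((Nat.le_succ k).trans hk1)]
      rw [show k+(n+1) = (k+1)+n from by omega]
      abel
    have h1' : Filter.Tendsto (fun n => seq k (n+1) + u k) Filter.atTop (nhds (c k + u k)) := by
      have := (hc k).comp (Filter.tendsto_add_atTop_nat 1)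
      exact this.add tendsto_const_nhds
    have := tendsto_nhds_unique (h1.congr (fun n => (h2 n))) h1'
    rw [this]; abel
  -- distance bound
  have hdistall : ∀ (j k : ℕ), dist (seq j k) (seq j 0) ≤ 2 * E := by
    intro j k
    have hsum : dist (seq j k) (seq j 0) ≤ ∑ i ∈ Finset.range k, E * (1/2)^i := by
      induction k with
      | zero => simp
      | succ k ih =>
          calc dist (seq j (k+1)) (seq j 0)
              ≤ dist (seq j (k+1)) (seq j k) + dist (seq j k) (seq j 0) := dist_triangle _ _ _
            _ ≤ E * (1/2)^k + ∑ i ∈ Finset.range k, E * (1/2)^i := by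
                have := hdistk j k
                rw [dist_comm] at this
                exact add_le_add this ih
            _ = ∑ i ∈ Finset.range (k+1), E * (1/2)^i := by
                rw [Finset.sum_range_succ]; ring
    refine hsum.trans ?_
    calc (∑ i ∈ Finset.range k, E * (1/2:ℝ)^i) = E * ∑ i ∈ Finset.range k, (1/2:ℝ)^i := by
          rw [Finset.mul_sum]
      _ ≤ E * 2 := mul_le_mul_of_nonneg_left (sum_geometric_two_le k) hE.le
      _ = 2 * E := by ring
  have hcdist : ∀ j, dist (c j) (seq j 0) ≤ 2 * E := by
    intro j
    have hmem : ∀ k, seq j k ∈ Metric.closedBall (seq j 0) (2*E) := by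
      intro k; rw [Metric.mem_closedBall]; exact hdistall j k
    have := IsClosed.mem_of_tendsto Metric.isClosed_closedBall (hc j)
      (Filter.Eventually.of_forall hmem)
    rwa [Metric.mem_closedBall] at this
  refine ⟨c, u, fun k => (aa k).1, rfl, fun k => (aa k).2, fun k => (hu k).1, hcompat, ?_, ?_⟩
  · intro j
    have := hcdist j
    rwa [hseq0 j] at this
  · intro j S hS hmemS
    refine IsClosed.mem_of_tendsto hS (hc j) (Filter.Eventually.of_forall fun k => ?_)
    show T' j (j+k) ((aa (j+k)).1) - rr j (j+k) ∈ S
    rw [hT'eq (Nat.le_add_right j k)]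
    exact hmemS k _ ((aa (j+k)).2) _ (hrrJ j (j+k))


theorem simple_cyclic {B M : Type*} [Ring B] [AddCommGroup M] [Module B M]
    (hs : IsSimpleModule B M) {v : M} (hv : v ≠ 0) (y : M) : ∃ a : B, a • v = y := by
  have h1 : Submodule.span B {v} = ⊤ := by
    rcases hs.eq_bot_or_eq_top (Submodule.span B {v}) with h | h
    · exact absurd (Submodule.span_singleton_eq_bot.mp h) hv
    · exact h
  exact Submodule.mem_span_singleton.mp (h1 ▸ Submodule.mem_top)

theorem simple_exists_ne_zero {B M : Type*} [Ring B] [AddCommGroup M] [Module B M]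
    (hs : IsSimpleModule B M) : ∃ v : M, v ≠ 0 := by
  by_contra h
  push_neg at h
  haveI := hs
  have hbt : (⊥ : Submodule B M) = ⊤ := by
    ext x; simp [h x]
  exact bot_ne_top hbt

theorem simple_ann_closed {B M : Type*} [NormedRing B] [CompleteSpace B] [AddCommGroup M]
    [Module B M] (hs : IsSimpleModule B M) {v : M} (hv : v ≠ 0) :
    IsClosed {a : B | a • v = 0} := by
  classical
  set I : Submodule B B := LinearMap.ker (LinearMap.toSpanSingleton B M v) with hI
  have hmemI : ∀ a : B, a ∈ I ↔ a • v = 0 := by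
    intro a; simp [hI, LinearMap.mem_ker, LinearMap.toSpanSingleton_apply]
  have hIset : {a : B | a • v = 0} = ↑I := by
    ext a; simp [hmemI a]
  have hInetop : I ≠ ⊤ := by
    intro htop
    have h1 : (1 : B) ∈ I := by rw [htop]; trivial
    rw [hmemI, one_smul] at h1
    exact hv h1
  have hcoatom : ∀ Js : Submodule B B, I < Js → Js = ⊤ := by
    intro Js hJs
    obtain ⟨b, hbJ, hbI⟩ := SetLike.exists_of_lt hJs
    have hbv : b • v ≠ 0 := fun h0 => hbI ((hmemI b).mpr h0)
    obtain ⟨t, ht⟩ := simple_cyclic hs hbv v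
    have h1 : (1 : B) - t * b ∈ I := by
      rw [hmemI, sub_smul, one_smul, mul_smul, ht, sub_self]
    rw [Submodule.eq_top_iff']
    intro z
    have h2 : (1 : B) ∈ Js := by
      have h3 := Js.add_mem (hJs.le h1) (Js.smul_mem t hbJ)
      rw [smul_eq_mul, sub_add_cancel] at h3
      exact h3
    have := Js.smul_mem z h2
    rwa [smul_eq_mul, mul_one] at this
  rw [hIset]
  apply isClosed_of_closure_subset
  intro cc hcc
  by_contra hccI
  have hccI' : cc ∉ I := fun h => hccI h
  set Js : Submodule B B := I ⊔ Submodule.span B {cc} with hJs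
  have hlt : I < Js := by
    refine lt_of_le_of_ne le_sup_left ?_
    intro heq
    apply hccI'
    rw [heq]
    exact SetLike.le_def.mp le_sup_right (Submodule.mem_span_singleton_self cc)
  have htop := hcoatom Js hlt
  have h1mem : (1 : B) ∈ I ⊔ Submodule.span B {cc} := by rw [← hJs, htop]; trivial
  obtain ⟨i, hiI, z, hz, hsum⟩ := Submodule.mem_sup.mp h1mem
  obtain ⟨t, rfl⟩ := Submodule.mem_span_singleton.mp hz
  obtain ⟨i', hi'I, hdist⟩ : ∃ i' ∈ (I : Set B), dist cc i' < 1/(‖t‖+1) := by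
    apply Metric.mem_closure_iff.mp hcc
    positivity
  have hw : i + t * i' ∈ I := I.add_mem hiI (by
    have := I.smul_mem t hi'I
    rwa [smul_eq_mul] at this)
  have hnorm : ‖1 - (i + t * i')‖ < 1 := by
    have he1 : (1:B) - (i + t * i') = t * (cc - i') := by
      rw [← hsum, smul_eq_mul, mul_sub]
      abel
    rw [he1]
    calc ‖t * (cc - i')‖ ≤ ‖t‖ * ‖cc - i'‖ := norm_mul_le _ _
      _ ≤ (‖t‖+1) * ‖cc - i'‖ := by nlinarith [norm_nonneg (cc - i'), norm_nonneg t]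
      _ < (‖t‖+1) * (1/(‖t‖+1)) := by
          apply mul_lt_mul_of_pos_left _ (by positivity)
          rwa [← dist_eq_norm]
      _ = 1 := by field_simp
  set uu : Bˣ := Units.oneSub (1 - (i + t * i')) hnorm with huudef
  have huu : (uu : B) = i + t * i' := by
    show (1 : B) - (1 - (i + t * i')) = i + t * i'
    abel
  have h1I : (1 : B) ∈ I := by
    have hmul := I.smul_mem ((uu⁻¹ : Bˣ) : B) hw
    rw [smul_eq_mul, ← huu] at hmul
    rwa [Units.inv_mul] at hmul
  apply hInetop
  rw [Submodule.eq_top_iff']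
  intro z
  have := I.smul_mem z h1I
  rwa [smul_eq_mul, mul_one] at this

/-!
STATEMENT 12: Let `M` be a coadmissible module over a Fréchet–Stein algebra `A`,
corresponding to the coherent sheaf `(M n)`.  If `M n` is a simple `A n`-module for
infinitely many `n`, then `M` is a simple `A`-module.
-/

theorem statement12
    (K : Type) [NontriviallyNormedField K] [CompleteSpace K] [IsUltrametricDist K]
    (A : ℕ → Type) [∀ n, NormedRing (A n)] [∀ n, NormedAlgebra K (A n)]
    [∀ n, CompleteSpace (A n)]
    (hnoeth : ∀ n, IsNoetherianRing (A n))
    (φ : ∀ n, A (n+1) →+* A n)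
    (hφcont : ∀ n, Continuous (φ n))
    (hflat : ∀ n, RightFlatRingHom (φ n))
    (AA : Type) [Ring AA] (π : ∀ n, AA →+* A n)
    (hcompat : ∀ n a, φ n (π (n+1) a) = π n a)
    (hdense : ∀ n, DenseRange (π n))
    (hlim : ∀ x : ∀ n, A n, (∀ n, φ n (x (n+1)) = x n) → ∃! a : AA, ∀ n, π n a = x n)
    -- `M` coadmissible, corresponding to the coherent sheaf `C`
    (C : CoherentSheaf A φ)
    (M : Type) [AddCommGroup M] [Module AA M]
    (e : M ≃+ ↥C.limSubgroup)
    (he : ∀ (s : AA) (x : M) (n : ℕ),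
      ((e (s • x) : ∀ k, C.N k) n) = π n s • ((e x : ∀ k, C.N k) n))
    (hsimple : {n : ℕ | IsSimpleModule (A n) (C.N n)}.Infinite) :
    IsSimpleModule AA M := by
  classical
  -- enumeration of simple levels
  have enum : ∀ n0 : ℕ, ∃ msq : ℕ → ℕ,
      (∀ k, n0 < msq k) ∧ (∀ j k : ℕ, j ≤ k → msq j ≤ msq k) ∧ (∀ k, k ≤ msq k) ∧
      (∀ k, IsSimpleModule (A (msq k)) (C.N (msq k))) := by
    intro n0
    have h1 : ∀ a : ℕ, ∃ b, b ∈ {n : ℕ | IsSimpleModule (A n) (C.N n)} ∧ a < b := by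
      intro a
      obtain ⟨b, hb, hab⟩ := hsimple.exists_gt a
      exact ⟨b, hb, hab⟩
    refine ⟨fun k => Nat.rec (h1 n0).choose (fun _ mk => (h1 mk).choose) k, ?_, ?_, ?_, ?_⟩
    · intro k
      induction k with
      | zero => exact (h1 n0).choose_spec.2
      | succ k ih => exact ih.trans (h1 _).choose_spec.2
    · intro j k h
      induction k, h using Nat.le_induction with
      | base => exact le_refl _
      | succ k hk ih => exact ih.trans ((h1 _).choose_spec.2).le
    · intro k
      induction k with
      | zero => exact Nat.zero_le _
      | succ k ih => exact Nat.succ_le_of_lt (lt_of_le_of_lt ih (h1 _).choose_spec.2)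
    · intro k
      cases k with
      | zero => exact (h1 n0).choose_spec.1
      | succ k => exact (h1 _).choose_spec.1
  have hdenseRT : ∀ {n n' : ℕ} (h : n ≤ n'), DenseRange ⇑(ringTower φ h) := by
    intro n n' h
    have h1 : Set.range ⇑(π n) ⊆ Set.range ⇑(ringTower φ h) := by
      rintro _ ⟨s, rfl⟩
      exact ⟨π n' s, sheaf_pi_compat π hcompat h s⟩
    exact Dense.mono h1 (hdense n)
  have hφsingle : ∀ (p : ℕ) (z : A (p+1)), ringTower φ (Nat.le_succ p) z = φ p z := by
    intro p z
    rw [ringTower_succ φ (le_refl p), ringTower_self]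
    rfl
  -- =========================== KEY STEP ===========================
  have key : ∀ x y : M, x ≠ 0 → ∃ s : AA, s • x = y := by
    intro x y hx
    have hZxc : ∀ n, C.f n ((e x).1 (n+1)) = (e x).1 n := (e x).2
    have hZyc : ∀ n, C.f n ((e y).1 (n+1)) = (e y).1 n := (e y).2
    have hZxtow : ∀ {j k : ℕ} (h : j ≤ k), addTower C.f h ((e x).1 k) = (e x).1 j := by
      intro j k h
      induction k, h using Nat.le_induction with
      | base => rw [addTower_self]; rfl
      | succ k hk ih =>
          rw [addTower_succ C.f hk]
          show addTower C.f hk (C.f k ((e x).1 (k+1))) = (e x).1 j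
          rw [hZxc k, ih]
    have hZytow : ∀ {j k : ℕ} (h : j ≤ k), addTower C.f h ((e y).1 k) = (e y).1 j := by
      intro j k h
      induction k, h using Nat.le_induction with
      | base => rw [addTower_self]; rfl
      | succ k hk ih =>
          rw [addTower_succ C.f hk]
          show addTower C.f hk (C.f k ((e y).1 (k+1))) = (e y).1 j
          rw [hZyc k, ih]
    have hex : ∃ n0, (e x).1 n0 ≠ 0 := by
      by_contra hcon
      push_neg at hcon
      apply hx
      have h0 : e x = 0 := by
        apply Subtype.ext
        funext n
        exact hcon n
      exact (AddEquiv.map_eq_zero_iff e).mp h0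
    obtain ⟨n0, hn0⟩ := hex
    have hnz : ∀ n, n0 ≤ n → (e x).1 n ≠ 0 := by
      intro n hn
      induction n, hn using Nat.le_induction with
      | base => exact hn0
      | succ n hn ih =>
          intro h0
          apply ih
          rw [← hZxc n, h0, map_zero]
    obtain ⟨msq, hm0, hmono, hkle, hmsimple⟩ := enum n0
    have hxkne : ∀ k, (e x).1 (msq k) ≠ 0 := fun k => hnz _ (hm0 k).le
    have hsemidown : ∀ {p q : ℕ} (h : p ≤ q) (b : A q),
        ringTower φ h b • (e x).1 p = addTower C.f h (b • (e x).1 q) := by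
      intro p q h b
      rw [sheaf_semilinear C h b ((e x).1 q), hZxtow h]
    have hannT : ∀ {p q : ℕ} (h : p ≤ q) (b : A q), b • (e x).1 q = 0 →
        ringTower φ h b • (e x).1 p = 0 := by
      intro p q h b hb
      rw [hsemidown h b, hb, map_zero]
    have hax : ∀ k, ∃ a : A (msq k), a • (e x).1 (msq k) = (e y).1 (msq k) :=
      fun k => simple_cyclic (hmsimple k) (hxkne k) _
    choose a ha using hax
    have hza : ∀ (j k : ℕ) (h : j ≤ k),
        ringTower φ (hmono j k h) (a k) • (e x).1 (msq j) = (e y).1 (msq j) := by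
      intro j k h
      induction k, h using Nat.le_induction with
      | base =>
          rw [ringTower_self]
          exact ha j
      | succ k hk ih =>
          rw [ringTower_trans φ (hmono j k hk) (hmono k (k+1) (Nat.le_succ k))]
          show ringTower φ (hmono j k hk)
            (ringTower φ (hmono k (k+1) (Nat.le_succ k)) (a (k+1))) • (e x).1 (msq j)
            = (e y).1 (msq j)
          have hd : (ringTower φ (hmono k (k+1) (Nat.le_succ k)) (a (k+1)) - a k) •
              (e x).1 (msq k) = 0 := by
            rw [sub_smul, ha k, hsemidown (hmono k (k+1) (Nat.le_succ k)) (a (k+1)), ha (k+1),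
              hZytow (hmono k (k+1) (Nat.le_succ k)), sub_self]
          have hsplit : ringTower φ (hmono k (k+1) (Nat.le_succ k)) (a (k+1))
              = a k + (ringTower φ (hmono k (k+1) (Nat.le_succ k)) (a (k+1)) - a k) := by abel
          rw [hsplit, map_add, add_smul, ih, hannT (hmono j k hk) _ hd, add_zero]
    -- density of annihilator images
    have hdenseI : ∀ (k : ℕ) (ξ : A (msq k)), ξ • (e x).1 (msq k) = 0 → ∀ ε : ℝ, 0 < ε →
        ∃ w : A (msq (k+1)), w • (e x).1 (msq (k+1)) = 0 ∧
          ‖ringTower φ (hmono k (k+1) (Nat.le_succ k)) w - ξ‖ < ε := by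
      intro k ξ hξ ε hε
      have hmem : ξ ∈ Submodule.span (A (msq k))
          (⇑(ringTower φ (hmono k (k+1) (Nat.le_succ k))) ''
            {s : A (msq (k+1)) | s • (e x).1 (msq (k+1)) = 0}) := by
        apply ann_chain C hnoeth hflat (hmono k (k+1) (Nat.le_succ k)) ((e x).1 (msq (k+1))) ξ
        rw [hZxtow (hmono k (k+1) (Nat.le_succ k))]
        exact hξ
      obtain ⟨nn, ff, gg, hsum⟩ := Submodule.mem_span_set'.mp hmem
      have hpre : ∀ i : Fin nn, ∃ b : A (msq (k+1)), b • (e x).1 (msq (k+1)) = 0 ∧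
          ringTower φ (hmono k (k+1) (Nat.le_succ k)) b = ↑(gg i) := fun i => (gg i).2
      choose bb hbb hfbb using hpre
      have happrox : ∀ i : Fin nn, ∃ β : A (msq (k+1)),
          dist (ff i) (ringTower φ (hmono k (k+1) (Nat.le_succ k)) β)
            < ε / (nn+1) / (‖(gg i : A (msq k))‖ + 1) := by
        intro i
        exact (hdenseRT (hmono k (k+1) (Nat.le_succ k))).exists_dist_lt _ (by positivity)
      choose β hβ using happrox
      refine ⟨∑ i, β i * bb i, ?_, ?_⟩
      · rw [Finset.sum_smul]
        refine Finset.sum_eq_zero fun i _ => ?_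
        rw [mul_smul, hbb i, smul_zero]
      · have hTw : ringTower φ (hmono k (k+1) (Nat.le_succ k)) (∑ i, β i * bb i) - ξ
            = ∑ i, (ringTower φ (hmono k (k+1) (Nat.le_succ k)) (β i) - ff i) *
                (gg i : A (msq k)) := by
          rw [map_sum, ← hsum, ← Finset.sum_sub_distrib]
          refine Finset.sum_congr rfl fun i _ => ?_
          rw [map_mul, hfbb i, smul_eq_mul, ← sub_mul]
        rw [hTw]
        have hbd : ∀ i : Fin nn,
            ‖(ringTower φ (hmono k (k+1) (Nat.le_succ k)) (β i) - ff i) * (gg i : A (msq k))‖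
              ≤ ε / (nn+1) := by
          intro i
          have h1 : ‖ringTower φ (hmono k (k+1) (Nat.le_succ k)) (β i) - ff i‖
              ≤ ε / (nn+1) / (‖(gg i : A (msq k))‖ + 1) := by
            have := hβ i
            rw [dist_eq_norm] at this
            have h2 : ff i - ringTower φ (hmono k (k+1) (Nat.le_succ k)) (β i)
                = -(ringTower φ (hmono k (k+1) (Nat.le_succ k)) (β i) - ff i) := by abel
            rw [h2, norm_neg] at this
            exact this.le
          calc ‖(ringTower φ (hmono k (k+1) (Nat.le_succ k)) (β i) - ff i) * (gg i : A (msq k))‖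
              ≤ ‖ringTower φ (hmono k (k+1) (Nat.le_succ k)) (β i) - ff i‖
                * ‖(gg i : A (msq k))‖ := norm_mul_le _ _
            _ ≤ (ε / (nn+1) / (‖(gg i : A (msq k))‖ + 1)) * (‖(gg i : A (msq k))‖ + 1) := by
                apply mul_le_mul h1 (by linarith [norm_nonneg (gg i : A (msq k))])
                  (norm_nonneg _) (by positivity)
            _ = ε / (nn+1) := by field_simp
        calc ‖∑ i, (ringTower φ (hmono k (k+1) (Nat.le_succ k)) (β i) - ff i) *
                (gg i : A (msq k))‖
            ≤ ∑ i, ‖(ringTower φ (hmono k (k+1) (Nat.le_succ k)) (β i) - ff i) *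
                (gg i : A (msq k))‖ := norm_sum_le _ _
          _ ≤ ∑ _i : Fin nn, ε / (nn+1) := Finset.sum_le_sum fun i _ => hbd i
          _ = nn * (ε / (nn+1)) := by
              rw [Finset.sum_const, Finset.card_univ, Fintype.card_fin, nsmul_eq_mul]
          _ < ε := by
              rw [mul_div_assoc']
              rw [div_lt_iff₀ (by positivity)]
              nlinarith
    -- apply the core construction
    have hAT : ∀ {p q : ℕ} (h : p ≤ q),
        (addTower (B := fun k => A (msq k))
          (fun k => (ringTower φ (hmono k (k+1) (Nat.le_succ k))).toAddMonoidHom) h)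
          = (ringTower φ (hmono p q h)).toAddMonoidHom := by
      intro p q h
      induction q, h using Nat.le_induction with
      | base => rw [addTower_self, ringTower_self]; rfl
      | succ q hq ih =>
          rw [addTower_succ _ hq, ih,
            ringTower_trans φ (hmono p q hq) (hmono q (q+1) (Nat.le_succ q))
              (h3 := hmono p (q+1) (hq.trans (Nat.le_succ q)))]
          rfl
    obtain ⟨c, u, a', ha'0, ha'W, huJ, hcomp, hdist2, hclosed⟩ :=
      tower_core (fun k => A (msq k))
        (fun k => (ringTower φ (hmono k (k+1) (Nat.le_succ k))).toAddMonoidHom)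
        (fun k => ringTower_continuous φ hφcont _)
        (fun k => {z : A (msq k) | (z - a k) • (e x).1 (msq k) = 0})
        (fun _ => ⊥)
        (by
          intro k uu huu
          rw [AddSubgroup.mem_bot] at huu
          subst huu
          rw [map_zero]
          exact AddSubgroup.zero_mem _)
        (by
          intro k z hz ε hε
          have hz' : (z - a k) • (e x).1 (msq k) = 0 := hz
          have hξann : (z - ringTower φ (hmono k (k+1) (Nat.le_succ k)) (a (k+1))) •
              (e x).1 (msq k) = 0 := by
            have h1 : z • (e x).1 (msq k) = (e y).1 (msq k) := by
              rw [sub_smul, sub_eq_zero] at hz'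
              rw [hz', ha k]
            have h2 : ringTower φ (hmono k (k+1) (Nat.le_succ k)) (a (k+1)) •
                (e x).1 (msq k) = (e y).1 (msq k) := by
              rw [hsemidown (hmono k (k+1) (Nat.le_succ k)) (a (k+1)), ha (k+1),
                hZytow (hmono k (k+1) (Nat.le_succ k))]
            rw [sub_smul, h1, h2, sub_self]
          obtain ⟨w, hwann, hwdist⟩ := hdenseI k _ hξann ε hε
          refine ⟨a (k+1) + w, ?_, 0, AddSubgroup.zero_mem _, ?_⟩
          · show (a (k+1) + w - a (k+1)) • (e x).1 (msq (k+1)) = 0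
            rw [add_sub_cancel_left]
            exact hwann
          · show ‖ringTower φ (hmono k (k+1) (Nat.le_succ k)) (a (k+1) + w) - z - 0‖ < ε
            rw [sub_zero, map_add]
            have heq : ringTower φ (hmono k (k+1) (Nat.le_succ k)) (a (k+1))
                + ringTower φ (hmono k (k+1) (Nat.le_succ k)) w - z
                = ringTower φ (hmono k (k+1) (Nat.le_succ k)) w
                  - (z - ringTower φ (hmono k (k+1) (Nat.le_succ k)) (a (k+1))) := by abel
            rw [heq]
            exact hwdist)
        1 one_pos (a 0)
        (by show (a 0 - a 0) • (e x).1 (msq 0) = 0; rw [sub_self, zero_smul])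
    have hcompat2 : ∀ k, ringTower φ (hmono k (k+1) (Nat.le_succ k)) (c (k+1)) = c k := by
      intro k
      have h1 := hcomp k
      have h2 := huJ k
      rw [AddSubgroup.mem_bot] at h2
      rw [h2] at h1
      exact sub_eq_zero.mp h1
    have hcW : ∀ j, (c j - a j) • (e x).1 (msq j) = 0 := by
      intro j
      have hSclosed : IsClosed {z : A (msq j) | (z - a j) • (e x).1 (msq j) = 0} := by
        have h1 : IsClosed {b : A (msq j) | b • (e x).1 (msq j) = 0} :=
          simple_ann_closed (hmsimple j) (hxkne j)
        have h2 : {z : A (msq j) | (z - a j) • (e x).1 (msq j) = 0}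
            = (fun z => z - a j) ⁻¹' {b : A (msq j) | b • (e x).1 (msq j) = 0} := rfl
        rw [h2]
        exact h1.preimage (continuous_id.sub continuous_const)
      refine hclosed j _ hSclosed ?_
      intro k z hzW ρ hρ
      rw [AddSubgroup.mem_bot] at hρ
      subst hρ
      rw [sub_zero, hAT (Nat.le_add_right j k)]
      show (ringTower φ (hmono j (j+k) (Nat.le_add_right j k)) z - a j) • (e x).1 (msq j) = 0
      have hz1 : ringTower φ (hmono j (j+k) (Nat.le_add_right j k)) z
          = ringTower φ (hmono j (j+k) (Nat.le_add_right j k)) (z - a (j+k))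
            + ringTower φ (hmono j (j+k) (Nat.le_add_right j k)) (a (j+k)) := by
        rw [← map_add, sub_add_cancel]
      rw [hz1, add_sub_assoc, add_smul,
        hannT (hmono j (j+k) (Nat.le_add_right j k)) _ hzW, zero_add, sub_smul,
        hza j (j+k) (Nat.le_add_right j k), ha j, sub_self]
    have hcy : ∀ j, c j • (e x).1 (msq j) = (e y).1 (msq j) := by
      intro j
      have h1 := hcW j
      rw [sub_smul, sub_eq_zero] at h1
      rw [h1, ha j]
    -- build the global element of AA
    have hα : ∀ n, φ n (ringTower φ (hkle (n+1)) (c (n+1))) = ringTower φ (hkle n) (c n) := by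
      intro n
      have h1 : φ n (ringTower φ (hkle (n+1)) (c (n+1)))
          = ringTower φ ((Nat.le_succ n).trans (hkle (n+1))) (c (n+1)) := by
        rw [ringTower_trans φ (Nat.le_succ n) (hkle (n+1))
          (h3 := (Nat.le_succ n).trans (hkle (n+1)))]
        rw [RingHom.comp_apply, hφsingle n]
      rw [h1]
      rw [ringTower_trans φ (hkle n) (hmono n (n+1) (Nat.le_succ n))
        (h3 := (Nat.le_succ n).trans (hkle (n+1)))]
      rw [RingHom.comp_apply, hcompat2 n]
    obtain ⟨s, hs, _⟩ := hlim (fun n => ringTower φ (hkle n) (c n)) hα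
    refine ⟨s, ?_⟩
    apply e.injective
    apply Subtype.ext
    funext n
    have h1 : (e (s • x)).1 n = π n s • (e x).1 n := he s x n
    have h2 : π n s = ringTower φ (hkle n) (c n) := hs n
    calc (e (s • x)).1 n = ringTower φ (hkle n) (c n) • (e x).1 n := by rw [h1, h2]
      _ = addTower C.f (hkle n) (c n • (e x).1 (msq n)) := hsemidown (hkle n) (c n)
      _ = addTower C.f (hkle n) ((e y).1 (msq n)) := by rw [hcy n]
      _ = (e y).1 n := hZytow (hkle n)
  -- =========================== NONTRIVIALITY ===========================
  obtain ⟨msq, hm0, hmono, hkle, hmsimple⟩ := enum 0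
  obtain ⟨v0, hv0⟩ := simple_exists_ne_zero (hmsimple 0)
  have vstep : ∀ k (v : C.N (msq k)), addTower C.f (hmono 0 k (Nat.zero_le k)) v ≠ 0 →
      ∃ v' : C.N (msq (k+1)), addTower C.f (hmono 0 (k+1) (Nat.zero_le (k+1))) v' ≠ 0 := by
    intro k v hv
    by_contra hcon
    push_neg at hcon
    have hkill : ∀ w ∈ Submodule.span (A (msq k))
        (Set.range ⇑(addTower C.f (hmono k (k+1) (Nat.le_succ k)))),
        addTower C.f (hmono 0 k (Nat.zero_le k)) w = 0 := by
      intro w hw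
      refine Submodule.span_induction
        (p := fun z _ => addTower C.f (hmono 0 k (Nat.zero_le k)) z = 0) ?_ ?_ ?_ ?_ hw
      · rintro _ ⟨v', rfl⟩
        have htr := addTower_trans C.f (hmono 0 k (Nat.zero_le k))
          (hmono k (k+1) (Nat.le_succ k)) (h3 := hmono 0 (k+1) (Nat.zero_le (k+1)))
        have hc := hcon v'
        rw [htr] at hc
        exact hc
      · exact map_zero _
      · intro z1 z2 _ _ ih1 ih2
        rw [map_add, ih1, ih2, add_zero]
      · intro b z _ ih
        rw [sheaf_semilinear C _ b z, ih, smul_zero]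
    exact hv (hkill v (by
      rw [sheaf_span_range_tower_top C (hmono k (k+1) (Nat.le_succ k))]
      trivial))
  obtain ⟨vv, hvv⟩ : ∃ vv : ∀ k, C.N (msq k),
      ∀ k, addTower C.f (hmono 0 k (Nat.zero_le k)) (vv k) ≠ 0 := by
    let vch : ∀ k, {v : C.N (msq k) // addTower C.f (hmono 0 k (Nat.zero_le k)) v ≠ 0} :=
      fun k => Nat.rec ⟨v0, by rw [addTower_self]; exact hv0⟩
        (fun k p => ⟨(vstep k p.1 p.2).choose, (vstep k p.1 p.2).choose_spec⟩) k
    exact ⟨fun k => (vch k).1, fun k => (vch k).2⟩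
  have hvne : ∀ k, vv k ≠ 0 := by
    intro k h0
    exact hvv k (by rw [h0, map_zero])
  have hww0 : ∀ k, addTower C.f (hmono 0 k (Nat.zero_le k))
      (addTower C.f (hmono k (k+1) (Nat.le_succ k)) (vv (k+1))) ≠ 0 := by
    intro k
    have htr := addTower_trans C.f (hmono 0 k (Nat.zero_le k))
      (hmono k (k+1) (Nat.le_succ k)) (h3 := hmono 0 (k+1) (Nat.zero_le (k+1)))
    have h2 := hvv (k+1)
    rw [htr] at h2
    exact h2
  have hwwne : ∀ k, addTower C.f (hmono k (k+1) (Nat.le_succ k)) (vv (k+1)) ≠ 0 := by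
    intro k h0
    exact hww0 k (by rw [h0, map_zero])
  have hgex : ∀ k, ∃ g : A (msq k),
      g • vv k = addTower C.f (hmono k (k+1) (Nat.le_succ k)) (vv (k+1)) :=
    fun k => simple_cyclic (hmsimple k) (hvne k) _
  choose g hg using hgex
  obtain ⟨ρ, hρpos, hρ⟩ : ∃ ρ : ℝ, 0 < ρ ∧
      ∀ b ∈ {b : A (msq 0) | b • vv 0 = 0}, ¬ dist (1 : A (msq 0)) b < ρ := by
    have h1J : (1 : A (msq 0)) ∉ {b : A (msq 0) | b • vv 0 = 0} := by
      intro h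
      exact hvne 0 (by rw [← one_smul (A (msq 0)) (vv 0)]; exact h)
    have hJ0closed : IsClosed {b : A (msq 0) | b • vv 0 = 0} :=
      simple_ann_closed (hmsimple 0) (hvne 0)
    have h2 : (1 : A (msq 0)) ∉ closure {b : A (msq 0) | b • vv 0 = 0} := by
      rw [hJ0closed.closure_eq]
      exact h1J
    by_contra hcon
    push_neg at hcon
    refine h2 (Metric.mem_closure_iff.mpr ?_)
    intro ε hεp
    obtain ⟨b, hb1, hb2⟩ := hcon ε hεp
    exact ⟨b, hb1, hb2⟩
  obtain ⟨cN, uN, aN', haN'0, _, huNJ, hcompN, hdistN, _⟩ :=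
    tower_core (fun k => A (msq k))
      (fun k => (AddMonoidHom.mulRight (g k)).comp
        (ringTower φ (hmono k (k+1) (Nat.le_succ k))).toAddMonoidHom)
      (fun k => by
        show Continuous fun z => ringTower φ (hmono k (k+1) (Nat.le_succ k)) z * g k
        exact (ringTower_continuous φ hφcont _).mul continuous_const)
      (fun _ => Set.univ)
      (fun k =>
        { carrier := {b : A (msq k) | b • vv k = 0}
          add_mem' := by
            intro p q hp hq
            simp only [Set.mem_setOf_eq] at *
            rw [add_smul, hp, hq, add_zero]
          zero_mem' := by simp
          neg_mem' := by
            intro p hp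
            simp only [Set.mem_setOf_eq] at *
            rw [neg_smul, hp, neg_zero] })
      (by
        intro k b hb
        show (ringTower φ (hmono k (k+1) (Nat.le_succ k)) b * g k) • vv k = 0
        rw [mul_smul, hg k, ← sheaf_semilinear C (hmono k (k+1) (Nat.le_succ k)) b,
          (show b • vv (k+1) = 0 from hb), map_zero])
      (by
        intro k z _ ε hε
        obtain ⟨b', hb'⟩ := simple_cyclic (hmsimple k) (hwwne k) (z • vv k)
        have hu : (b' * g k - z) • vv k = 0 := by
          rw [sub_smul, mul_smul, hg k, hb', sub_self]
        obtain ⟨β, hβ⟩ := (hdenseRT (hmono k (k+1) (Nat.le_succ k))).exists_dist_lt b'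
          (show (0:ℝ) < ε/(‖g k‖+1) by positivity)
        refine ⟨β, trivial, b' * g k - z, hu, ?_⟩
        show ‖ringTower φ (hmono k (k+1) (Nat.le_succ k)) β * g k - z - (b' * g k - z)‖ < ε
        have heq : ringTower φ (hmono k (k+1) (Nat.le_succ k)) β * g k - z - (b' * g k - z)
            = (ringTower φ (hmono k (k+1) (Nat.le_succ k)) β - b') * g k := by
          rw [sub_mul]
          abel
        rw [heq]
        calc ‖(ringTower φ (hmono k (k+1) (Nat.le_succ k)) β - b') * g k‖
            ≤ ‖ringTower φ (hmono k (k+1) (Nat.le_succ k)) β - b'‖ * ‖g k‖ := norm_mul_le _ _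
          _ ≤ ‖ringTower φ (hmono k (k+1) (Nat.le_succ k)) β - b'‖ * (‖g k‖ + 1) := by
              have := norm_nonneg (ringTower φ (hmono k (k+1) (Nat.le_succ k)) β - b')
              nlinarith [norm_nonneg (g k)]
          _ < (ε/(‖g k‖+1)) * (‖g k‖ + 1) := by
              apply mul_lt_mul_of_pos_right _ (by positivity)
              have hβ' := hβ
              rw [dist_comm, dist_eq_norm] at hβ'
              exact hβ'
          _ = ε := by field_simp)
      (ρ/4) (by positivity) 1 trivial
  have hc0 : cN 0 • vv 0 ≠ 0 := by
    intro h0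
    have hd : dist (1 : A (msq 0)) (cN 0) < ρ := by
      have h1 := hdistN 0
      rw [haN'0] at h1
      have : dist (1 : A (msq 0)) (cN 0) ≤ 2 * (ρ/4) := by
        rw [dist_comm]
        exact h1
      linarith
    exact hρ (cN 0) h0 hd
  have hgc : ∀ k, ringTower φ (hmono k (k+1) (Nat.le_succ k)) (cN (k+1)) * g k
      = cN k + uN k := by
    intro k
    have h1 := hcompN k
    have h2 : (((AddMonoidHom.mulRight (g k)).comp
        (ringTower φ (hmono k (k+1) (Nat.le_succ k))).toAddMonoidHom) (cN (k+1)))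
        = ringTower φ (hmono k (k+1) (Nat.le_succ k)) (cN (k+1)) * g k := rfl
    rw [h2] at h1
    rw [sub_eq_iff_eq_add] at h1
    rw [h1]
    abel
  have hξcomp : ∀ k, addTower C.f (hmono k (k+1) (Nat.le_succ k)) (cN (k+1) • vv (k+1))
      = cN k • vv k := by
    intro k
    rw [sheaf_semilinear C (hmono k (k+1) (Nat.le_succ k)) (cN (k+1)) (vv (k+1))]
    rw [← hg k, ← mul_smul, hgc k, add_smul]
    rw [show uN k • vv k = 0 from huNJ k, add_zero]
  have hzzc0 : ∀ n, C.f n (addTower C.f (hkle (n+1)) (cN (n+1) • vv (n+1)))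
      = addTower C.f (hkle n) (cN n • vv n) := by
    intro n
    have hfs : ∀ xx : C.N (n+1), addTower C.f (Nat.le_succ n) xx = C.f n xx := by
      intro xx
      rw [addTower_succ C.f (le_refl n), addTower_self]
      rfl
    rw [← hfs]
    rw [← AddMonoidHom.comp_apply, ← addTower_trans C.f (Nat.le_succ n) (hkle (n+1))
      (h3 := (Nat.le_succ n).trans (hkle (n+1)))]
    rw [addTower_trans C.f (hkle n) (hmono n (n+1) (Nat.le_succ n))
      (h3 := (Nat.le_succ n).trans (hkle (n+1)))]
    rw [AddMonoidHom.comp_apply, hξcomp n]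
  have hzmem : (fun n => addTower C.f (hkle n) (cN n • vv n)) ∈ C.limSubgroup := hzzc0
  have hchain : ∀ j, addTower C.f (hmono 0 j (Nat.zero_le j)) (cN j • vv j) = cN 0 • vv 0 := by
    intro j
    induction j with
    | zero => rw [addTower_self]; rfl
    | succ j ih =>
        rw [addTower_trans C.f (hmono 0 j (Nat.zero_le j)) (hmono j (j+1) (Nat.le_succ j))
          (h3 := hmono 0 (j+1) (Nat.zero_le (j+1))), AddMonoidHom.comp_apply, hξcomp j, ih]
  have hzzne : (fun n => addTower C.f (hkle n) (cN n • vv n)) (msq 0) ≠ 0 := by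
    show addTower C.f (hkle (msq 0)) (cN (msq 0) • vv (msq 0)) ≠ 0
    have h1 : addTower C.f (hkle (msq 0)) (cN (msq 0) • vv (msq 0)) = cN 0 • vv 0 :=
      hchain (msq 0)
    rw [h1]
    exact hc0
  have hx0ne : e.symm ⟨_, hzmem⟩ ≠ 0 := by
    intro h0
    have h1 : (⟨_, hzmem⟩ : ↥C.limSubgroup) = 0 := by
      have h2 := congrArg e h0
      rwa [AddEquiv.apply_symm_apply, map_zero] at h2
    have h3 : (fun n => addTower C.f (hkle n) (cN n • vv n)) = 0 := congrArg Subtype.val h1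
    exact hzzne (by rw [h3]; rfl)
  -- =========================== CONCLUSION ===========================
  haveI : Nontrivial (Submodule AA M) := by
    refine ⟨⟨⊥, ⊤, ?_⟩⟩
    intro hbt
    apply hx0ne
    have : e.symm ⟨_, hzmem⟩ ∈ (⊥ : Submodule AA M) := by
      rw [hbt]
      trivial
    exact (Submodule.mem_bot AA).mp this
  suffices hso : IsSimpleOrder (Submodule AA M) by exact { toIsSimpleOrder := hso }
  refine ⟨fun P => ?_⟩
  rcases eq_or_ne P ⊥ with h | h
  · exact Or.inl h
  · right
    obtain ⟨xP, hxP, hxPne⟩ := (Submodule.ne_bot_iff P).mp h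
    rw [Submodule.eq_top_iff']
    intro yy
    obtain ⟨s, hs⟩ := key xP yy hxPne
    rw [← hs]
    exact P.smul_mem s hxP
end

section
/- Let G be a group with a p-valuation ω and let ‖·‖_{1/p} be the multiplicative norm on the completed group ring ℤ_p[[G]] with ‖g−1‖_{1/p} ≤ p^{−ω(g)}. For structure coefficients c_{βγ,α} ∈ ℤ_p defined by b^β b^γ = Σ_α c_{βγ,α} b^α (where b_i = h_i − 1 for an ordered basis (h_1,…,h_d) and τα = Σ_i α_i ω(h_i)), one has v_p(c_{βγ,α}) ≥ max(0, τβ + τγ − τα), and consequently |c_{βγ,α}| r^{τα} ≤ r^{τβ+τγ} for every r with 1/p ≤ r ≤ 1. -/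
/-!
The structure coefficient `c_{βγ,α}` appears in the expansion of `𝐛^β 𝐛^γ`, so
`‖c_{βγ,α}‖ p^{-τα} ≤ ‖𝐛^β 𝐛^γ‖ = ‖𝐛^β‖ ‖𝐛^γ‖ ≤ p^{-τβ-τγ}` by the sup formula for the norm,
its multiplicativity and `‖h_i - 1‖ ≤ p^{-ω(h_i)}`. Together with `‖c_{βγ,α}‖ ≤ 1` this is the
valuation bound, and the bound for `1/p ≤ r ≤ 1` follows by comparing `r` with `1/p` when
`τα ≤ τβ + τγ` and with `1` otherwise.
-/

section MultiplicativeNorm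

variable {R : Type*} [NormedRing R]

lemma norm_one_le_one_of_norm_mul (hmul : ∀ x y : R, ‖x * y‖ = ‖x‖ * ‖y‖) :
    ‖(1 : R)‖ ≤ 1 := by
  have h := hmul 1 1
  rw [mul_one] at h
  nlinarith [norm_nonneg (1 : R)]

lemma norm_pow_le_of_norm_mul (hmul : ∀ x y : R, ‖x * y‖ = ‖x‖ * ‖y‖) (x : R) (n : ℕ) :
    ‖x ^ n‖ ≤ ‖x‖ ^ n := by
  induction n with
  | zero => simpa using norm_one_le_one_of_norm_mul hmul
  | succ n ih =>
    rw [pow_succ, pow_succ, hmul]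
    exact mul_le_mul_of_nonneg_right ih (norm_nonneg x)

lemma norm_list_prod_le_of_norm_mul (hmul : ∀ x y : R, ‖x * y‖ = ‖x‖ * ‖y‖) (l : List R) :
    ‖l.prod‖ ≤ (l.map (‖·‖)).prod := by
  induction l with
  | nil => simpa using norm_one_le_one_of_norm_mul hmul
  | cons a l ih =>
    simp only [List.prod_cons, List.map_cons, hmul]
    exact mul_le_mul_of_nonneg_left ih (norm_nonneg a)

lemma norm_prod_ofFn_pow_le_rpow {d : ℕ} (hmul : ∀ x y : R, ‖x * y‖ = ‖x‖ * ‖y‖)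
    {b : ℝ} (hb : 0 < b) {x : Fin d → R} {w : Fin d → ℝ} (hx : ∀ i, ‖x i‖ ≤ b ^ (-w i))
    (δ : Fin d → ℕ) :
    ‖(List.ofFn fun i => x i ^ δ i).prod‖ ≤ b ^ (-∑ i, (δ i : ℝ) * w i) :=
  calc ‖(List.ofFn fun i => x i ^ δ i).prod‖
      ≤ ((List.ofFn fun i => x i ^ δ i).map (‖·‖)).prod :=
        norm_list_prod_le_of_norm_mul hmul _
    _ = ∏ i, ‖x i ^ δ i‖ := by rw [List.map_ofFn, List.prod_ofFn]; rfl
    _ ≤ ∏ i, (b ^ (-w i)) ^ δ i :=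
        Finset.prod_le_prod (fun i _ => norm_nonneg _) fun i _ =>
          (norm_pow_le_of_norm_mul hmul _ _).trans
            (pow_le_pow_left₀ (norm_nonneg _) (hx i) _)
    _ = b ^ (-∑ i, (δ i : ℝ) * w i) := by
        rw [← Finset.sum_neg_distrib, Real.rpow_sum_of_pos hb]
        refine Finset.prod_congr rfl fun i _ => ?_
        rw [← Real.rpow_natCast, ← Real.rpow_mul hb.le]
        ring_nf

end MultiplicativeNorm

section RealBounds

variable {p a A B : ℝ}

lemma le_rpow_sub_of_mul_rpow_neg_le (hp : 0 < p) (h : a * p ^ (-A) ≤ p ^ (-B)) :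
    a ≤ p ^ (A - B) := by
  rw [show A - B = -B - -A by ring, Real.rpow_sub hp, le_div_iff₀ (Real.rpow_pos_of_pos hp _)]
  exact h

lemma le_rpow_neg_max_of_le_rpow_sub (ha : a ≤ 1) (h : a ≤ p ^ (A - B)) :
    a ≤ p ^ (-max 0 (B - A)) := by
  rcases le_total (B - A) 0 with hBA | hBA
  · rwa [max_eq_left hBA, neg_zero, Real.rpow_zero]
  · rwa [max_eq_right hBA, neg_sub]

lemma mul_rpow_le_rpow_of_le_rpow_sub (hp : 0 < p) (ha : a ≤ 1) (h : a ≤ p ^ (A - B))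
    {r : ℝ} (hr₁ : 1 / p ≤ r) (hr₂ : r ≤ 1) :
    a * r ^ A ≤ r ^ B := by
  have hr : 0 < r := (one_div_pos.mpr hp).trans_le hr₁
  rcases le_total A B with hAB | hBA
  · have hpr : p ^ (A - B) ≤ r ^ (B - A) := by
      rw [show A - B = -(B - A) by ring, Real.rpow_neg hp.le, ← Real.inv_rpow hp.le, ← one_div]
      exact Real.rpow_le_rpow (by positivity) hr₁ (by linarith)
    calc a * r ^ A ≤ r ^ (B - A) * r ^ A :=
          mul_le_mul_of_nonneg_right (h.trans hpr) (Real.rpow_nonneg hr.le _)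
      _ = r ^ B := by rw [← Real.rpow_add hr, sub_add_cancel]
  · calc a * r ^ A ≤ 1 * r ^ B :=
          mul_le_mul ha (Real.rpow_le_rpow_of_exponent_ge hr hr₂ hBA)
            (Real.rpow_nonneg hr.le _) zero_le_one
      _ = r ^ B := one_mul _

end RealBounds

theorem statement13_general
    (p : ℕ) [Fact p.Prime] (G : Type) [Group G]
    -- a `p`-valuation on `G` (with the convention `ω 1 = ∞`, all axioms are stated for
    -- nonidentity elements), rational-valued
    (ω : G → ℝ)
    (hωrange : ∀ g : G, g ≠ 1 → 1 / ((p : ℝ) - 1) < ω g)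
    -- the ordered basis
    (d : ℕ) (h : Fin d → G) (hne : ∀ i, h i ≠ 1)
    -- the completed group ring `R = ℤ_p[[G]]`
    (R : Type) [NormedRing R] [Algebra ℤ_[p] R]
    (ι : G →* R)
    (hg : ∀ g : G, g ≠ 1 → ‖ι g - 1‖ ≤ (p : ℝ) ^ (-ω g))
    (hmulnorm : ∀ x y : R, ‖x * y‖ = ‖x‖ * ‖y‖)
    -- the norm of `Σ_α d_α 𝐛^α` is `sup_α ‖d_α‖ p^{-τα}`
    (hnorm : ∀ (dc : (Fin d → ℕ) → ℤ_[p]) (x : R),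
      HasSum (fun α => dc α • (List.ofFn fun i => (ι (h i) - 1) ^ α i).prod) x →
      ‖x‖ = ⨆ α : Fin d → ℕ, ‖dc α‖ * (p : ℝ) ^ (-(∑ i, (α i : ℝ) * ω (h i))))
    -- the structure constants `c_{βγ,α}`
    (c : (Fin d → ℕ) → (Fin d → ℕ) → (Fin d → ℕ) → ℤ_[p])
    (hc : ∀ β γ,
      HasSum (fun α => c β γ α • (List.ofFn fun i => (ι (h i) - 1) ^ α i).prod)
        ((List.ofFn fun i => (ι (h i) - 1) ^ β i).prod *
          (List.ofFn fun i => (ι (h i) - 1) ^ γ i).prod))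
    (β γ α : Fin d → ℕ) :
    ‖c β γ α‖ ≤ (p : ℝ) ^
        (-(max 0 ((∑ i, (β i : ℝ) * ω (h i)) + (∑ i, (γ i : ℝ) * ω (h i)) -
          ∑ i, (α i : ℝ) * ω (h i)))) ∧
      ∀ r : ℝ, 1 / (p : ℝ) ≤ r → r ≤ 1 →
        ‖c β γ α‖ * r ^ (∑ i, (α i : ℝ) * ω (h i)) ≤
          r ^ ((∑ i, (β i : ℝ) * ω (h i)) + ∑ i, (γ i : ℝ) * ω (h i)) := by
  have hp : (1 : ℝ) < p := by exact_mod_cast (Fact.out : p.Prime).one_lt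
  have hp₀ : (0 : ℝ) < p := zero_lt_one.trans hp
  set τ : (Fin d → ℕ) → ℝ := fun δ => ∑ i, (δ i : ℝ) * ω (h i)
  have hτ : ∀ δ, 0 ≤ τ δ := fun δ => Finset.sum_nonneg fun i _ =>
    mul_nonneg (Nat.cast_nonneg _)
      ((div_nonneg zero_le_one (by linarith)).trans (hωrange _ (hne i)).le)
  have hmonomial : ∀ δ : Fin d → ℕ,
      ‖(List.ofFn fun i => (ι (h i) - 1) ^ δ i).prod‖ ≤ (p : ℝ) ^ (-τ δ) :=
    norm_prod_ofFn_pow_le_rpow hmulnorm hp₀ fun i => hg _ (hne i)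
  have hbdd : BddAbove (Set.range fun δ => ‖c β γ δ‖ * (p : ℝ) ^ (-τ δ)) := by
    refine ⟨1, Set.forall_mem_range.mpr fun δ => ?_⟩
    exact mul_le_one₀ (PadicInt.norm_le_one _) (Real.rpow_nonneg hp₀.le _)
      (Real.rpow_le_one_of_one_le_of_nonpos hp.le (neg_nonpos.mpr (hτ δ)))
  have hcoeff : ‖c β γ α‖ * (p : ℝ) ^ (-τ α) ≤ (p : ℝ) ^ (-(τ β + τ γ)) :=
    calc ‖c β γ α‖ * (p : ℝ) ^ (-τ α)
        ≤ ⨆ δ, ‖c β γ δ‖ * (p : ℝ) ^ (-τ δ) := le_ciSup hbdd α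
      _ = ‖(List.ofFn fun i => (ι (h i) - 1) ^ β i).prod‖ *
            ‖(List.ofFn fun i => (ι (h i) - 1) ^ γ i).prod‖ := by
          rw [← hmulnorm]; exact (hnorm _ _ (hc β γ)).symm
      _ ≤ (p : ℝ) ^ (-τ β) * (p : ℝ) ^ (-τ γ) :=
          mul_le_mul (hmonomial β) (hmonomial γ) (norm_nonneg _) (Real.rpow_nonneg hp₀.le _)
      _ = (p : ℝ) ^ (-(τ β + τ γ)) := by rw [neg_add, Real.rpow_add hp₀]
  have hc₁ := PadicInt.norm_le_one (c β γ α)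
  have hcsub := le_rpow_sub_of_mul_rpow_neg_le hp₀ hcoeff
  exact ⟨le_rpow_neg_max_of_le_rpow_sub hc₁ hcsub,
    fun r => mul_rpow_le_rpow_of_le_rpow_sub hp₀ hc₁ hcsub⟩

theorem statement13
    (p : ℕ) [Fact p.Prime] (G : Type) [Group G]
    -- a `p`-valuation on `G` (with the convention `ω 1 = ∞`, all axioms are stated for
    -- nonidentity elements), rational-valued
    (ω : G → ℝ)
    (hωrange : ∀ g : G, g ≠ 1 → 1 / ((p : ℝ) - 1) < ω g)
    (hωrat : ∀ g : G, g ≠ 1 → ∃ q : ℚ, ω g = (q : ℝ))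
    (hωmin : ∀ g h : G, g ≠ 1 → h ≠ 1 → g * h⁻¹ ≠ 1 → min (ω g) (ω h) ≤ ω (g * h⁻¹))
    (hωcomm : ∀ g h : G, g ≠ 1 → h ≠ 1 → g⁻¹ * h⁻¹ * g * h ≠ 1 →
      ω g + ω h ≤ ω (g⁻¹ * h⁻¹ * g * h))
    (hωpow : ∀ g : G, g ≠ 1 → ω (g ^ p) = ω g + 1)
    -- the ordered basis
    (d : ℕ) (h : Fin d → G) (hne : ∀ i, h i ≠ 1)
    -- the completed group ring `R = ℤ_p[[G]]`
    (R : Type) [NormedRing R] [Algebra ℤ_[p] R] [CompleteSpace R]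
    (ι : G →* R)
    (hg : ∀ g : G, g ≠ 1 → ‖ι g - 1‖ ≤ (p : ℝ) ^ (-ω g))
    (hmulnorm : ∀ x y : R, ‖x * y‖ = ‖x‖ * ‖y‖)
    -- the norm of `Σ_α d_α 𝐛^α` is `sup_α ‖d_α‖ p^{-τα}`
    (hnorm : ∀ (dc : (Fin d → ℕ) → ℤ_[p]) (x : R),
      HasSum (fun α => dc α • (List.ofFn fun i => (ι (h i) - 1) ^ α i).prod) x →
      ‖x‖ = ⨆ α : Fin d → ℕ, ‖dc α‖ * (p : ℝ) ^ (-(∑ i, (α i : ℝ) * ω (h i))))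
    -- the structure constants `c_{βγ,α}`
    (c : (Fin d → ℕ) → (Fin d → ℕ) → (Fin d → ℕ) → ℤ_[p])
    (hc : ∀ β γ,
      HasSum (fun α => c β γ α • (List.ofFn fun i => (ι (h i) - 1) ^ α i).prod)
        ((List.ofFn fun i => (ι (h i) - 1) ^ β i).prod *
          (List.ofFn fun i => (ι (h i) - 1) ^ γ i).prod))
    (β γ α : Fin d → ℕ) :
    ‖c β γ α‖ ≤ (p : ℝ) ^
        (-(max 0 ((∑ i, (β i : ℝ) * ω (h i)) + (∑ i, (γ i : ℝ) * ω (h i)) -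
          ∑ i, (α i : ℝ) * ω (h i)))) ∧
      ∀ r : ℝ, 1 / (p : ℝ) ≤ r → r ≤ 1 →
        ‖c β γ α‖ * r ^ (∑ i, (α i : ℝ) * ω (h i)) ≤
          r ^ ((∑ i, (β i : ℝ) * ω (h i)) + ∑ i, (γ i : ℝ) * ω (h i)) :=
  statement13_general p G ω hωrange d h hne R ι hg hmulnorm hnorm c hc β γ α
end

section
/- With notation as in the preceding context, for each r with 1/p ≤ r < 1 the norm ‖λ‖_r := sup_α |d_α| r^{τα} on the locally analytic distribution algebra D(G,K) (where λ = Σ_α d_α b^α is the Mahler-type expansion) is submultiplicative: ‖λμ‖_r ≤ ‖λ‖_r ‖μ‖_r. -/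
/-!
Write `‖a‖_w = sup_α ‖a α‖ w α` for the weight `w α = r ^ τα`. The estimate on the structure
constants says exactly `‖c_{βγ,α}‖ w α ≤ w β w γ`, so every term `a_β b_γ c_{βγ,α}` of the
expansion of the `α`-th coefficient of the product has norm at most `‖a‖_w ‖b‖_w / w α`.
In an ultrametric field a convergent sum is bounded by any common bound of its terms, which
gives `‖(ab)_α‖ w α ≤ ‖a‖_w ‖b‖_w` for every `α`.
-/

noncomputable def weightedSupNorm {K σ : Type*} [Norm K] (w : σ → ℝ) (a : σ → K) : ℝ :=
  ⨆ α, ‖a α‖ * w α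

section WeightedSupNorm

variable {K σ : Type*} [NormedDivisionRing K] {w : σ → ℝ} {a b : σ → K}

lemma weightedSupNorm_nonneg (hw : ∀ α, 0 ≤ w α) : 0 ≤ weightedSupNorm w a :=
  Real.iSup_nonneg fun α => mul_nonneg (norm_nonneg _) (hw α)

lemma norm_mul_weight_le_weightedSupNorm (ha : BddAbove (Set.range fun α => ‖a α‖ * w α))
    (α : σ) : ‖a α‖ * w α ≤ weightedSupNorm w a :=
  le_ciSup ha α

lemma norm_mul_mul_mul_weight_le (hw : ∀ α, 0 ≤ w α)
    (ha : BddAbove (Set.range fun α => ‖a α‖ * w α))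
    (hb : BddAbove (Set.range fun α => ‖b α‖ * w α))
    {β γ α : σ} {c : K} (hc : ‖c‖ * w α ≤ w β * w γ) :
    ‖a β * b γ * c‖ * w α ≤ weightedSupNorm w a * weightedSupNorm w b :=
  calc ‖a β * b γ * c‖ * w α = ‖a β‖ * ‖b γ‖ * (‖c‖ * w α) := by
        rw [norm_mul, norm_mul]; ring
    _ ≤ ‖a β‖ * ‖b γ‖ * (w β * w γ) := by gcongr
    _ = (‖a β‖ * w β) * (‖b γ‖ * w γ) := by ring
    _ ≤ weightedSupNorm w a * weightedSupNorm w b :=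
        mul_le_mul (norm_mul_weight_le_weightedSupNorm ha β)
          (norm_mul_weight_le_weightedSupNorm hb γ) (mul_nonneg (norm_nonneg _) (hw γ))
          (weightedSupNorm_nonneg hw)

theorem weightedSupNorm_le_mul_of_hasSum [IsUltrametricDist K] {e : σ → K}
    {c : σ → σ → σ → K} (hw : ∀ α, 0 < w α)
    (ha : BddAbove (Set.range fun α => ‖a α‖ * w α))
    (hb : BddAbove (Set.range fun α => ‖b α‖ * w α))
    (hc : ∀ β γ α, ‖c β γ α‖ * w α ≤ w β * w γ)
    (he : ∀ α, HasSum (fun βγ : σ × σ => a βγ.1 * b βγ.2 * c βγ.1 βγ.2 α) (e α)) :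
    weightedSupNorm w e ≤ weightedSupNorm w a * weightedSupNorm w b := by
  have hw₀ : ∀ α, 0 ≤ w α := fun α => (hw α).le
  have hab₀ : 0 ≤ weightedSupNorm w a * weightedSupNorm w b :=
    mul_nonneg (weightedSupNorm_nonneg hw₀) (weightedSupNorm_nonneg hw₀)
  refine Real.iSup_le (fun α => ?_) hab₀
  have hterm : ∀ βγ : σ × σ, ‖a βγ.1 * b βγ.2 * c βγ.1 βγ.2 α‖ ≤
      weightedSupNorm w a * weightedSupNorm w b / w α := fun βγ =>
    (le_div_iff₀ (hw α)).2 (norm_mul_mul_mul_weight_le hw₀ ha hb (hc _ _ α))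
  have hcoeff : ‖e α‖ ≤ weightedSupNorm w a * weightedSupNorm w b / w α := by
    rw [← (he α).tsum_eq]
    exact IsUltrametricDist.norm_tsum_le_of_forall_le_of_nonneg
      (div_nonneg hab₀ (hw₀ α)) hterm
  exact (le_div_iff₀ (hw α)).1 hcoeff

end WeightedSupNorm

theorem statement14_general
    (p : ℕ) [Fact p.Prime] (G : Type)
    (ω : G → ℝ)
    (d : ℕ) (h : Fin d → G)
    -- the coefficient field
    (K : Type) [NontriviallyNormedField K] [IsUltrametricDist K]
    -- the distribution algebra `D = D(G,K)` with its Dirac distributions and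
    -- coefficient (Mahler-type expansion) map
    (D : Type) [Ring D] [Algebra K D]
    (coeff : D →ₗ[K] ((Fin d → ℕ) → K))
    -- boundedness: `{‖d_α‖ r^{τα}}_α` is bounded for each `0 < r < 1`
    (hbdd : ∀ (x : D) (r : ℝ), 0 < r → r < 1 →
      BddAbove (Set.range fun α : Fin d → ℕ =>
        ‖coeff x α‖ * r ^ (∑ i, (α i : ℝ) * ω (h i))))
    -- the structure constants and their estimate
    (c : (Fin d → ℕ) → (Fin d → ℕ) → (Fin d → ℕ) → K)
    (hc : ∀ (β γ α : Fin d → ℕ) (r : ℝ), 1 / (p : ℝ) ≤ r → r ≤ 1 →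
      ‖c β γ α‖ * r ^ (∑ i, (α i : ℝ) * ω (h i)) ≤
        r ^ ((∑ i, (β i : ℝ) * ω (h i)) + ∑ i, (γ i : ℝ) * ω (h i)))
    -- the expansion of a product is obtained by multiplying expansions and rearranging
    (hmul : ∀ (x y : D) (α : Fin d → ℕ),
      HasSum (fun βγ : (Fin d → ℕ) × (Fin d → ℕ) =>
        coeff x βγ.1 * coeff y βγ.2 * c βγ.1 βγ.2 α) (coeff (x * y) α))
    (r : ℝ) (hr₁ : 1 / (p : ℝ) ≤ r) (hr₂ : r < 1)
    (x y : D) :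
    (⨆ α : Fin d → ℕ, ‖coeff (x * y) α‖ * r ^ (∑ i, (α i : ℝ) * ω (h i))) ≤
      (⨆ α : Fin d → ℕ, ‖coeff x α‖ * r ^ (∑ i, (α i : ℝ) * ω (h i))) *
        (⨆ α : Fin d → ℕ, ‖coeff y α‖ * r ^ (∑ i, (α i : ℝ) * ω (h i))) := by
  have hr₀ : 0 < r :=
    (one_div_pos.2 (Nat.cast_pos.2 (Fact.out : p.Prime).pos)).trans_le hr₁
  exact weightedSupNorm_le_mul_of_hasSum (fun α => Real.rpow_pos_of_pos hr₀ _)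
    (hbdd x r hr₀ hr₂) (hbdd y r hr₀ hr₂)
    (fun β γ α => Real.rpow_add hr₀ _ _ ▸ hc β γ α r hr₁ hr₂.le) (hmul x y)

theorem statement14
    (p : ℕ) [Fact p.Prime] (G : Type) [Group G]
    (ω : G → ℝ)
    (hωrange : ∀ g : G, g ≠ 1 → 1 / ((p : ℝ) - 1) < ω g)
    (hωrat : ∀ g : G, g ≠ 1 → ∃ q : ℚ, ω g = (q : ℝ))
    (d : ℕ) (h : Fin d → G) (hne : ∀ i, h i ≠ 1)
    -- the coefficient field
    (K : Type) [NontriviallyNormedField K] [CompleteSpace K] [IsUltrametricDist K]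
    -- the distribution algebra `D = D(G,K)` with its Dirac distributions and
    -- coefficient (Mahler-type expansion) map
    (D : Type) [Ring D] [Algebra K D]
    (ι : G →* D)
    (coeff : D →ₗ[K] ((Fin d → ℕ) → K))
    (hinj : Function.Injective coeff)
    -- the expansion of the monomial `𝐛^α` is the `α`-th delta family
    (hmono : ∀ α : Fin d → ℕ,
      coeff ((List.ofFn fun i => (ι (h i) - 1) ^ α i).prod) =
        fun α' => if α' = α then 1 else 0)
    -- boundedness: `{‖d_α‖ r^{τα}}_α` is bounded for each `0 < r < 1`
    (hbdd : ∀ (x : D) (r : ℝ), 0 < r → r < 1 →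
      BddAbove (Set.range fun α : Fin d → ℕ =>
        ‖coeff x α‖ * r ^ (∑ i, (α i : ℝ) * ω (h i))))
    -- the structure constants and their estimate
    (c : (Fin d → ℕ) → (Fin d → ℕ) → (Fin d → ℕ) → K)
    (hc : ∀ (β γ α : Fin d → ℕ) (r : ℝ), 1 / (p : ℝ) ≤ r → r ≤ 1 →
      ‖c β γ α‖ * r ^ (∑ i, (α i : ℝ) * ω (h i)) ≤
        r ^ ((∑ i, (β i : ℝ) * ω (h i)) + ∑ i, (γ i : ℝ) * ω (h i)))
    -- the expansion of a product is obtained by multiplying expansions and rearranging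
    (hmul : ∀ (x y : D) (α : Fin d → ℕ),
      HasSum (fun βγ : (Fin d → ℕ) × (Fin d → ℕ) =>
        coeff x βγ.1 * coeff y βγ.2 * c βγ.1 βγ.2 α) (coeff (x * y) α))
    (r : ℝ) (hr₁ : 1 / (p : ℝ) ≤ r) (hr₂ : r < 1)
    (x y : D) :
    (⨆ α : Fin d → ℕ, ‖coeff (x * y) α‖ * r ^ (∑ i, (α i : ℝ) * ω (h i))) ≤
      (⨆ α : Fin d → ℕ, ‖coeff x α‖ * r ^ (∑ i, (α i : ℝ) * ω (h i))) *
        (⨆ α : Fin d → ℕ, ‖coeff y α‖ * r ^ (∑ i, (α i : ℝ) * ω (h i))) :=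
  statement14_general p G ω d h K D coeff hbdd c hc hmul r hr₁ hr₂ x y
end
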